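/- arXiv:2309.03371 — 9 statements merged into one kernel-verified Lean document; each statement's English description precedes it below -/
import Mathlib

section
/- Let m, n be coprime positive integers. A semi-module for m, n is a subset A ⊂ ℤ that is bounded below and satisfies m + A ⊆ A and n + A ⊆ A. For any semi-module A, the set Ā = A \ (n + A) is finite with exactly n elements. -/
/-- for coprime positive m, n and A ⊆ ℤ a (nonempty) semi-module for m, n
(bounded below, m + A ⊆ A, n + A ⊆ A), the set Ā = A \ (n + A) is finite with exactly
n elements. -/
theorem stmt_3 (m n : ℕ) (hm : 0 < m) (hn : 0 < n) (hcop : Nat.gcd m n = 1)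
    (A : Set ℤ) (hne : A.Nonempty) (hbdd : BddBelow A)
    (hmA : ∀ a ∈ A, (m : ℤ) + a ∈ A) (hnA : ∀ a ∈ A, (n : ℤ) + a ∈ A) :
    (A \ ((fun a => (n : ℤ) + a) '' A)).Finite ∧
      (A \ ((fun a => (n : ℤ) + a) '' A)).ncard = n := by
  haveI : NeZero n := ⟨hn.ne'⟩
  have addM : ∀ a ∈ A, ∀ k : ℕ, (k * m : ℤ) + a ∈ A := by
    intro a ha k
    induction k with
    | zero => simpa using ha
    | succ k ih =>
      have h := hmA _ ih
      convert h using 1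
      push_cast; ring
  have addN : ∀ a ∈ A, ∀ k : ℕ, (k * n : ℤ) + a ∈ A := by
    intro a ha k
    induction k with
    | zero => simpa using ha
    | succ k ih =>
      have h := hnA _ ih
      convert h using 1
      push_cast; ring
  have hunit : IsUnit (m : ZMod n) := (ZMod.isUnit_iff_coprime m n).mpr hcop
  have hS : ∀ r : ZMod n, ∃ x : ℤ, (x ∈ A ∧ (x : ZMod n) = r) ∧
      ∀ y : ℤ, (y ∈ A ∧ (y : ZMod n) = r) → x ≤ y := by
    intro r
    obtain ⟨a, ha⟩ := hne
    have hNE : ∃ x : ℤ, x ∈ A ∧ (x : ZMod n) = r := by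
      set z : ZMod n := (r - (a : ZMod n)) * (m : ZMod n)⁻¹ with hz
      refine ⟨(z.val * m : ℤ) + a, addM a ha z.val, ?_⟩
      push_cast
      rw [ZMod.natCast_val, ZMod.cast_id, hz, mul_assoc,
        ZMod.inv_mul_of_unit _ hunit]
      ring
    obtain ⟨b, hb⟩ := hbdd
    have hBdd : ∃ b : ℤ, ∀ z : ℤ, (z ∈ A ∧ (z : ZMod n) = r) → b ≤ z :=
      ⟨b, fun z hz => hb hz.1⟩
    exact Int.exists_least_of_bdd hBdd hNE
  choose f hf hfmin using hS
  have hfA : ∀ r, f r ∈ A := fun r => (hf r).1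
  have hfr : ∀ r, ((f r : ℤ) : ZMod n) = r := fun r => (hf r).2
  have hinj : Function.Injective f := by
    intro r s h
    rw [← hfr r, ← hfr s, h]
  have hset : A \ ((fun a => (n : ℤ) + a) '' A) = Set.range f := by
    ext x
    constructor
    · rintro ⟨hxA, hx⟩
      set r := (x : ZMod n)
      have hle : f r ≤ x := hfmin r x ⟨hxA, rfl⟩
      have hdvd : (n : ℤ) ∣ x - f r := by
        have : ((x - f r : ℤ) : ZMod n) = 0 := by
          push_cast [hfr r]
          ring
        exact (ZMod.intCast_zmod_eq_zero_iff_dvd _ _).mp this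
      obtain ⟨t, ht⟩ := hdvd
      have ht0 : 0 ≤ t := by
        nlinarith [hn, Int.natCast_pos.mpr hn]
      rcases eq_or_lt_of_le ht0 with h0 | hpos
      · have : x = f r := by rw [← h0, mul_zero] at ht; omega
        exact ⟨r, this.symm⟩
      · exfalso
        apply hx
        refine ⟨x - n, ?_, by ring⟩
        have hx' : x - (n : ℤ) = ((t - 1).toNat * n : ℤ) + f r := by
          rw [Int.toNat_of_nonneg (by omega)]
          have hxe : x = (n : ℤ) * t + f r := by omega
          rw [hxe]; ring
        rw [hx']
        exact addN _ (hfA r) _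
    · rintro ⟨r, rfl⟩
      refine ⟨hfA r, ?_⟩
      rintro ⟨b, hbA, hbe⟩
      have hbe' : (n : ℤ) + b = f r := hbe
      have hble : f r ≤ b := by
        refine hfmin r b ⟨hbA, ?_⟩
        rw [show ((b : ℤ) : ZMod n) = (((n : ℤ) + b : ℤ) : ZMod n) by push_cast; simp,
          hbe', hfr]
      have hn' : (0 : ℤ) < n := by exact_mod_cast hn
      omega
  rw [hset]
  refine ⟨Set.finite_range f, ?_⟩
  rw [← Set.image_univ, Set.ncard_image_of_injective _ hinj, Set.ncard_univ]
  simp [Nat.card_eq_fintype_card, ZMod.card]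
end

section
/- Let m, n be coprime positive integers and let A be a semi-module for m, n (a subset of ℤ bounded below with m + A ⊆ A and n + A ⊆ A). Set Ā = A \ (n+A), a₀ = min Ā. Then there exists a unique tuple μ' ∈ ℕ^n such that, defining inductively a_i = a_{i−1} + m − μ'(i)·n for i = 1, …, n, one has a_n = a₀ and {a₀, a₁, …, a_{n−1}} = Ā. -/
/-- for coprime positive m, n and a semi-module A for m, n with
Ā = A \ (n+A) and a₀ = min Ā, there exists a unique μ' ∈ ℕ^n such that the recursion
a_i = a_{i−1} + m − μ'(i)·n satisfies a_n = a₀ and {a₀, …, a_{n−1}} = Ā. -/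
theorem stmt_4 (m n : ℕ) (hm : 0 < m) (hn : 0 < n) (hcop : Nat.gcd m n = 1)
    (A : Set ℤ) (hne : A.Nonempty) (hbdd : BddBelow A)
    (hmA : ∀ a ∈ A, (m : ℤ) + a ∈ A) (hnA : ∀ a ∈ A, (n : ℤ) + a ∈ A)
    (Abar : Set ℤ) (hAbar : Abar = A \ ((fun a => (n : ℤ) + a) '' A))
    (a₀ : ℤ) (ha₀ : IsLeast Abar a₀) :
    ∃! μ' : Fin n → ℕ,
      ∀ a : ℕ → ℤ, a 0 = a₀ → (∀ i : Fin n, a (i + 1) = a i + m - μ' i * n) →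
        a n = a₀ ∧ Set.range (fun i : Fin n => a i) = Abar := by
  classical
  have hnZ : (0:ℤ) < n := by exact_mod_cast hn
  obtain ⟨ha₀Abar, ha₀min⟩ := ha₀
  have ha₀A : a₀ ∈ A := by rw [hAbar] at ha₀Abar; exact ha₀Abar.1
  -- a₀ + k*m ∈ A for all k : ℕ
  have hkm : ∀ k : ℕ, a₀ + (k:ℤ) * m ∈ A := by
    intro k
    induction k with
    | zero => simpa using ha₀A
    | succ k ih =>
      have h := hmA _ ih
      have he : (m:ℤ) + (a₀ + (k:ℤ) * m) = a₀ + ((k:ℤ)+1) * m := by ring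
      rw [he] at h
      exact_mod_cast h
  -- closure under adding n*j
  have hclosn : ∀ a ∈ A, ∀ j : ℕ, a + (n:ℤ) * j ∈ A := by
    intro a ha j
    induction j with
    | zero => simpa using ha
    | succ j ih =>
      have h := hnA _ ih
      have he : (n:ℤ) + (a + (n:ℤ) * j) = a + (n:ℤ) * ((j:ℤ)+1) := by ring
      rw [he] at h
      exact_mod_cast h
  -- Bezout
  obtain ⟨u, v, huv⟩ : ∃ u v : ℤ, (m:ℤ) * u + (n:ℤ) * v = 1 :=
    ⟨Nat.gcdA m n, Nat.gcdB m n, by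
      have h := Nat.gcd_eq_gcd_ab m n
      rw [hcop] at h
      exact_mod_cast h.symm⟩
  -- every residue class mod n contains a₀ + k*m for some k < n
  have L1 : ∀ x : ℤ, ∃ k : ℕ, k < n ∧ (n:ℤ) ∣ (a₀ + (k:ℤ) * m - x) := by
    intro x
    set t : ℤ := (x - a₀) * u with ht
    have h2 : 0 ≤ t % n := Int.emod_nonneg t (by positivity)
    have h1 : t % n < n := Int.emod_lt_of_pos t hnZ
    refine ⟨(t % n).toNat, by omega, ?_⟩
    have hc : ((t % n).toNat : ℤ) = t % n := Int.toNat_of_nonneg h2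
    rw [hc]
    refine ⟨(x - a₀) * (-v) - (t / n) * m, ?_⟩
    have hmod : t % n = t - n * (t / n) := Int.emod_def t n
    rw [hmod, ht]
    linear_combination (x - a₀) * huv
  -- least element of A in each residue class
  have L2 : ∀ x : ℤ, ∃ y : ℤ, (y ∈ A ∧ (n:ℤ) ∣ y - x) ∧
      ∀ z, z ∈ A ∧ (n:ℤ) ∣ z - x → y ≤ z := by
    intro x
    obtain ⟨k, hk, hdvd⟩ := L1 x
    obtain ⟨b, hb⟩ := hbdd
    exact Int.exists_least_of_bdd (P := fun y => y ∈ A ∧ (n:ℤ) ∣ y - x)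
      ⟨b, fun z hz => hb hz.1⟩ ⟨a₀ + (k:ℤ) * m, hkm k, hdvd⟩
  choose f hf hfmin using L2
  have hfA : ∀ x, f x ∈ A := fun x => (hf x).1
  have hfdvd : ∀ x, (n:ℤ) ∣ f x - x := fun x => (hf x).2
  -- f depends only on the residue class
  have hfcong : ∀ x y : ℤ, (n:ℤ) ∣ x - y → f x = f y := by
    intro x y hxy
    have h1 : f x ≤ f y := by
      refine hfmin x (f y) ⟨hfA y, ?_⟩
      have : f y - x = (f y - y) - (x - y) := by ring
      rw [this]; exact dvd_sub (hfdvd y) hxy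
    have h2 : f y ≤ f x := by
      refine hfmin y (f x) ⟨hfA x, ?_⟩
      have : f x - y = (f x - x) + (x - y) := by ring
      rw [this]; exact dvd_add (hfdvd x) hxy
    omega
  -- f x ∈ Abar
  have hfAbar : ∀ x, f x ∈ Abar := by
    intro x
    rw [hAbar]
    refine ⟨hfA x, ?_⟩
    rintro ⟨a, haA, hae⟩
    have hae' : (n:ℤ) + a = f x := hae
    have haA' : a ∈ A ∧ (n:ℤ) ∣ a - x := by
      constructor
      · exact haA
      · have : a - x = (f x - x) - n := by omega
        rw [this]; exact dvd_sub (hfdvd x) (dvd_refl _)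
    have := hfmin x a haA'
    omega
  -- elements of Abar are fixed points of f
  have hfix : ∀ y ∈ Abar, f y = y := by
    intro y hy
    rw [hAbar] at hy
    have h1 : f y ≤ y := hfmin y y ⟨hy.1, by simp⟩
    rcases eq_or_lt_of_le h1 with h | h
    · exact h
    · exfalso
      obtain ⟨c, hc⟩ := hfdvd y
      have hcneg : c < 0 := by nlinarith
      have : y - n = f y + (n:ℤ) * (-c - 1 : ℤ).toNat := by
        have h' : ((-c - 1 : ℤ).toNat : ℤ) = -c - 1 := Int.toNat_of_nonneg (by omega)
        rw [h']; linarith [hc]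
      have hyA : y - n ∈ A := by rw [this]; exact hclosn _ (hfA y) _
      exact hy.2 ⟨y - n, hyA, by ring⟩
  -- the canonical sequence
  set D : ℕ → ℤ := fun i => f (a₀ + (i:ℤ) * m) with hD
  have hD0 : D 0 = a₀ := by
    have : a₀ + ((0:ℕ):ℤ) * m = a₀ := by simp
    simp only [hD, this]
    exact hfix a₀ ha₀Abar
  have hDn : D n = a₀ := by
    have h1 : f (a₀ + (n:ℤ) * m) = f a₀ := hfcong _ _ ⟨m, by ring⟩
    simp only [hD]
    rw [h1]
    exact hfix a₀ ha₀Abar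
  have hDdvd : ∀ i : ℕ, (n:ℤ) ∣ D i - (a₀ + (i:ℤ) * m) := fun i => hfdvd _
  have hDAbar : ∀ i : ℕ, D i ∈ Abar := fun i => hfAbar _
  have hDA : ∀ i : ℕ, D i ∈ A := fun i => hfA _
  -- step bounds
  have hstep_le : ∀ i : ℕ, D (i+1) ≤ D i + m := by
    intro i
    refine hfmin _ _ ⟨?_, ?_⟩
    · have h := hmA _ (hDA i); rwa [add_comm] at h
    · obtain ⟨c, hc⟩ := hDdvd i
      refine ⟨c, ?_⟩
      push_cast
      linarith [hc]
  have hstep_dvd : ∀ i : ℕ, (n:ℤ) ∣ (D i + m - D (i+1)) := by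
    intro i
    obtain ⟨c, hc⟩ := hDdvd i
    obtain ⟨c', hc'⟩ := hDdvd (i+1)
    refine ⟨c - c', ?_⟩
    push_cast at hc' ⊢
    linarith [hc, hc']
  have hstep_nonneg : ∀ i : ℕ, 0 ≤ D i + m - D (i+1) := by
    intro i; linarith [hstep_le i]
  -- define μ'
  set μ : Fin n → ℕ := fun i => ((D i + m - D (i+1)) / n).toNat with hμ
  have hμ_spec : ∀ i : Fin n, (μ i : ℤ) * n = D i + m - D (i+1) := by
    intro i
    have hd := hstep_dvd i
    have hq : 0 ≤ (D (i:ℕ) + m - D ((i:ℕ)+1)) / n :=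
      Int.ediv_nonneg (hstep_nonneg i) (le_of_lt hnZ)
    simp only [hμ]
    rw [Int.toNat_of_nonneg hq]
    exact Int.ediv_mul_cancel hd
  -- any sequence satisfying the recursion agrees with D up to n
  have hseqeq : ∀ a : ℕ → ℤ, a 0 = a₀ →
      (∀ i : Fin n, a ((i:ℕ) + 1) = a (i:ℕ) + m - μ i * n) →
      ∀ i : ℕ, i ≤ n → a i = D i := by
    intro a h0 hrec i
    induction i with
    | zero => intro _; rw [h0, hD0]
    | succ i ih =>
      intro hi
      have hi' : i < n := by omega
      have h := hrec ⟨i, hi'⟩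
      simp only [Fin.val_mk] at h
      rw [h, ih (by omega)]
      have := hμ_spec ⟨i, hi'⟩
      simp only [Fin.val_mk] at this
      linarith [this]
  -- range of D on Fin n is Abar
  have hrangeD : Set.range (fun i : Fin n => D (i:ℕ)) = Abar := by
    apply Set.eq_of_subset_of_subset
    · rintro _ ⟨i, rfl⟩; exact hDAbar _
    · intro y hy
      obtain ⟨k, hk, hdvd⟩ := L1 y
      refine ⟨⟨k, hk⟩, ?_⟩
      simp only [Fin.val_mk]
      have h1 : f (a₀ + (k:ℤ) * m) = f y := hfcong _ _ hdvd
      simp only [hD]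
      rw [h1]
      exact hfix y hy
  -- existence + uniqueness
  refine ⟨μ, ?_, ?_⟩
  · intro a h0 hrec
    have hag := hseqeq a h0 hrec
    constructor
    · rw [hag n le_rfl, hDn]
    · have : (fun i : Fin n => a (i:ℕ)) = fun i : Fin n => D (i:ℕ) := by
        funext i
        exact hag i (le_of_lt i.isLt)
      rw [this, hrangeD]
  · intro ν hν
    -- build the sequence for ν
    set ν' : ℕ → ℕ := fun j => if h : j < n then ν ⟨j, h⟩ else 0 with hν'
    set c : ℕ → ℤ := fun i => Nat.rec a₀ (fun j x => x + m - ν' j * n) i with hc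
    have hc0 : c 0 = a₀ := rfl
    have hcstep : ∀ j : ℕ, c (j+1) = c j + m - ν' j * n := fun j => rfl
    have hcrec : ∀ i : Fin n, c ((i:ℕ) + 1) = c (i:ℕ) + m - ν i * n := by
      intro i
      rw [hcstep]
      have : ν' (i:ℕ) = ν i := by
        simp only [hν', i.isLt, dif_pos]
      rw [this]
    obtain ⟨hcn, hcr⟩ := hν c hc0 hcrec
    -- c i ≡ a₀ + i*m mod n
    have hcdvd : ∀ i : ℕ, (n:ℤ) ∣ c i - (a₀ + (i:ℤ) * m) := by
      intro i
      induction i with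
      | zero => simp [hc0]
      | succ i ih =>
        obtain ⟨d, hd⟩ := ih
        refine ⟨d - ν' i, ?_⟩
        rw [hcstep]
        push_cast
        push_cast at hd
        linarith [hd]
    -- c i = D i for i ≤ n
    have hcD : ∀ i : ℕ, i ≤ n → c i = D i := by
      intro i hi
      rcases eq_or_lt_of_le hi with h | h
      · subst h; rw [hcn, hDn]
      · have hmem : c i ∈ Abar := by
          rw [← hcr]
          exact ⟨⟨i, h⟩, rfl⟩
        have h1 : f (c i) = c i := hfix _ hmem
        have h2 : f (c i) = f (a₀ + (i:ℤ) * m) := hfcong _ _ (hcdvd i)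
        simp only [hD]
        rw [← h2, h1]
    -- conclude ν = μ
    funext i
    have h1 : (ν i : ℤ) * n = c (i:ℕ) + m - c ((i:ℕ)+1) := by
      have := hcrec i; linarith [this]
    have h2 : (μ i : ℤ) * n = D (i:ℕ) + m - D ((i:ℕ)+1) := hμ_spec i
    rw [hcD _ (le_of_lt i.isLt), hcD _ i.isLt] at h1
    have : (ν i : ℤ) = (μ i : ℤ) := by
      have hne : (n:ℤ) ≠ 0 := ne_of_gt hnZ
      nlinarith [h1, h2]
    exact_mod_cast this
end

section
/- Let μ/ν be a skew Young diagram and let λ, λ' be partitions (dominant integer vectors) with λ ⪯ λ', meaning λ' − λ is a nonnegative integer combination of simple coroots e_i − e_{i+1} (equivalently λ' dominates λ in the dominance order with equal sums). Then the Kostka number K_{μ/ν}(λ') is at most K_{μ/ν}(λ). In particular, K_{μ/ν}(λ') ≠ 0 implies K_{μ/ν}(λ) ≠ 0. -/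
/-- A semistandard skew tableau of shape μ/ν: zero outside the shape, positive entries
on the shape, weakly increasing rows, strictly increasing columns. -/
def IsSkewSSYT (μ ν : ℕ → ℕ) (T : ℕ → ℕ → ℕ) : Prop :=
  (∀ i j, ¬(ν i ≤ j ∧ j < μ i) → T i j = 0) ∧
  (∀ i j, ν i ≤ j → j < μ i → 1 ≤ T i j) ∧
  (∀ i j₁ j₂, ν i ≤ j₁ → j₁ ≤ j₂ → j₂ < μ i → T i j₁ ≤ T i j₂) ∧
  (∀ i j, ν i ≤ j → j < μ i → ν (i + 1) ≤ j → j < μ (i + 1) → T i j < T (i + 1) j)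

/-- The tableau T has content lam: for each t ≥ 1 there are exactly lam t cells with
entry t. -/
def HasContent (μ ν : ℕ → ℕ) (T : ℕ → ℕ → ℕ) (lam : ℕ → ℕ) : Prop :=
  ∀ t : ℕ, 1 ≤ t →
    {p : ℕ × ℕ | ν p.1 ≤ p.2 ∧ p.2 < μ p.1 ∧ T p.1 p.2 = t}.ncard = lam t

/-- The Kostka number K_{μ/ν}(lam). -/
noncomputable def Kostka (μ ν : ℕ → ℕ) (lam : ℕ → ℕ) : ℕ :=
  Nat.card {T : ℕ → ℕ → ℕ // IsSkewSSYT μ ν T ∧ HasContent μ ν T lam}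

/-! Moving one unit of content from `t` to `t + 1` when `c t > c (t + 1)` cannot decrease the
Kostka number: the crystal operator `f_t` changes the rightmost unbracketed `t` into `t + 1` and
maps tableaux of content `c` injectively into tableaux of the moved content, its inverse being
`e_t`.

If `λ'` dominates `λ ≠ λ'`, then at the last index `t + 1` where the excess of the partial sums of
`λ'` over those of `λ` is maximal one has `λ' t ≥ λ t ≥ λ (t + 1) > λ' (t + 1)`, and moving a unit
there keeps `λ'` above `λ` while decreasing the total excess; induct on that excess. -/

open Finset

section Maxima

def IsMaxUpTo (f : ℕ → ℤ) (N k : ℕ) : Prop := ∀ j ≤ N, f j ≤ f k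

open Classical in
noncomputable def lastMax (f : ℕ → ℤ) (N : ℕ) : ℕ := Nat.findGreatest (IsMaxUpTo f N) N

noncomputable def firstMax (f : ℕ → ℤ) (N : ℕ) : ℕ := sInf {k | IsMaxUpTo f N k}

variable {f : ℕ → ℤ} {N : ℕ}

theorem exists_isMaxUpTo (f : ℕ → ℤ) (N : ℕ) : ∃ k ≤ N, IsMaxUpTo f N k := by
  obtain ⟨k, hk, hmax⟩ := (range (N + 1)).exists_max_image f nonempty_range_add_one
  exact ⟨k, Nat.lt_succ_iff.1 (mem_range.1 hk), fun j hj => hmax j (mem_range.2 (by omega))⟩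

theorem lastMax_le (f : ℕ → ℤ) (N : ℕ) : lastMax f N ≤ N := by
  classical exact Nat.findGreatest_le N

theorem isMaxUpTo_lastMax (f : ℕ → ℤ) (N : ℕ) : IsMaxUpTo f N (lastMax f N) := by
  classical
  obtain ⟨k, hkN, hk⟩ := exists_isMaxUpTo f N
  exact Nat.findGreatest_spec hkN hk

theorem lt_lastMax_of_lastMax_lt {k : ℕ} (hk : lastMax f N < k) (hkN : k ≤ N) :
    f k < f (lastMax f N) := by
  classical
  have hnot : ¬IsMaxUpTo f N k := Nat.findGreatest_is_greatest hk hkN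
  simp only [IsMaxUpTo, not_forall, not_le] at hnot
  obtain ⟨j, hjN, hj⟩ := hnot
  exact hj.trans_le (isMaxUpTo_lastMax f N j hjN)

theorem firstMax_eq {i : ℕ} (hiN : i ≤ N) (hi : IsMaxUpTo f N i) (hlt : ∀ k < i, f k < f i) :
    firstMax f N = i := by
  refine le_antisymm (Nat.sInf_le hi) (le_csInf ⟨i, hi⟩ fun k hk => ?_)
  by_contra! hki
  exact (hlt k hki).not_ge (hk i hiN)

theorem firstMax_of_bump {g : ℕ → ℤ}
    (hg : ∀ k, g k = f k + (if lastMax f N ≤ k then 1 else 0) +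
      (if lastMax f N < k then 1 else 0)) :
    firstMax g N = lastMax f N := by
  set i := lastMax f N
  have hmax := isMaxUpTo_lastMax f N
  refine firstMax_eq (lastMax_le f N) (fun j hj => ?_) (fun k hk => ?_)
  · rw [hg, hg]
    rcases lt_trichotomy j i with h | rfl | h
    · simp only [if_neg h.not_ge, if_neg (lt_asymm h), le_refl, lt_irrefl, if_true, if_false]
      linarith [hmax j hj]
    · simp
    · have := lt_lastMax_of_lastMax_lt h hj
      simp only [if_pos h, if_pos h.le, le_refl, lt_irrefl, if_true, if_false]
      linarith
  · rw [hg, hg]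
    simp only [if_neg hk.not_ge, if_neg (lt_asymm hk), le_refl, lt_irrefl, if_true, if_false]
    linarith [hmax k (by have := lastMax_le f N; omega)]

end Maxima

section Bracket

def bracket (a b : ℕ → ℕ) (k : ℕ) : ℤ := ∑ i ∈ range (k + 1), (b i : ℤ) - ∑ i ∈ range k, (a i : ℤ)

variable (a b : ℕ → ℕ)

theorem bracket_zero : bracket a b 0 = b 0 := by simp [bracket]

theorem bracket_succ (k : ℕ) : bracket a b (k + 1) = bracket a b k + b (k + 1) - a k := by
  simp only [bracket, sum_range_succ _ (k + 1), sum_range_succ _ k]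
  ring

theorem bracket_eq_sub_of_eq_zero {N : ℕ} (hbN : b N = 0) :
    bracket a b N = ∑ i ∈ range N, (b i : ℤ) - ∑ i ∈ range N, (a i : ℤ) := by
  simp [bracket, sum_range_succ _ N, hbN]

theorem bracket_of_move {a' b' : ℕ → ℕ} {p : ℕ}
    (ha : ∀ i, a' i + (if i = p then 1 else 0) = a i)
    (hb : ∀ i, b' i = b i + (if i = p then 1 else 0)) (k : ℕ) :
    bracket a' b' k = bracket a b k + (if p ≤ k then 1 else 0) + (if p < k then 1 else 0) := by
  have hsum : ∀ (u v : ℕ → ℕ), (∀ i, v i = u i + (if i = p then 1 else 0)) → ∀ m,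
      ∑ i ∈ range m, (v i : ℤ) = ∑ i ∈ range m, (u i : ℤ) + (if p < m then 1 else 0) := by
    intro u v huv m
    simp only [huv, Nat.cast_add, sum_add_distrib, Nat.cast_ite, Nat.cast_one, Nat.cast_zero,
      sum_ite_eq', mem_range]
  rw [bracket, bracket, hsum b b' hb, hsum a' a (fun i => (ha i).symm)]
  simp only [Nat.lt_succ_iff]
  ring

end Bracket

section Tableau

variable (μ ν : ℕ → ℕ)

def rowCols (T : ℕ → ℕ → ℕ) (i s : ℕ) : Finset ℕ := (Ico (ν i) (μ i)).filter (T i · = s)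

def rowCount (T : ℕ → ℕ → ℕ) (s i : ℕ) : ℕ := (rowCols μ ν T i s).card

variable {μ ν}

theorem row_lt_of_col_lt {N i j : ℕ} (hN : ∀ i, N ≤ i → μ i = 0) (hj : j < μ i) : i < N := by
  by_contra! hi
  have := hN i hi
  omega

@[simp]
theorem mem_rowCols {T : ℕ → ℕ → ℕ} {i s j : ℕ} :
    j ∈ rowCols μ ν T i s ↔ ν i ≤ j ∧ j < μ i ∧ T i j = s := by
  simp [rowCols, and_assoc]

theorem ncard_cells_eq_sum_rowCount {N : ℕ} (hN : ∀ i, N ≤ i → μ i = 0) (T : ℕ → ℕ → ℕ) (s : ℕ) :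
    {p : ℕ × ℕ | ν p.1 ≤ p.2 ∧ p.2 < μ p.1 ∧ T p.1 p.2 = s}.ncard =
      ∑ i ∈ range N, rowCount μ ν T s i := by
  have hcells : {p : ℕ × ℕ | ν p.1 ≤ p.2 ∧ p.2 < μ p.1 ∧ T p.1 p.2 = s} =
      ↑(((range N).sigma fun i => rowCols μ ν T i s).map
        (Equiv.sigmaEquivProd ℕ ℕ).toEmbedding) := by
    ext ⟨i, j⟩
    simp only [Set.mem_ofPred_eq, coe_map, Set.mem_image, mem_coe, mem_sigma, mem_range,
      mem_rowCols, Equiv.coe_toEmbedding, Sigma.exists, Equiv.sigmaEquivProd_apply,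
      Prod.mk.injEq]
    constructor
    · rintro ⟨h1, h2, h3⟩
      exact ⟨i, j, ⟨row_lt_of_col_lt hN h2, h1, h2, h3⟩, rfl, rfl⟩
    · rintro ⟨i, j, ⟨-, h⟩, rfl, rfl⟩
      exact h
  rw [hcells, Set.ncard_coe_finset, card_map, card_sigma]
  rfl

theorem hasContent_iff_sum_rowCount {N : ℕ} (hN : ∀ i, N ≤ i → μ i = 0) {T : ℕ → ℕ → ℕ}
    {c : ℕ → ℕ} :
    HasContent μ ν T c ↔ ∀ s, 1 ≤ s → ∑ i ∈ range N, rowCount μ ν T s i = c s := by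
  simp only [HasContent, ncard_cells_eq_sum_rowCount hN]

variable {N : ℕ}

theorem one_le_content_of_mem (hN : ∀ i, N ≤ i → μ i = 0) {T : ℕ → ℕ → ℕ} {c : ℕ → ℕ}
    (hT : IsSkewSSYT μ ν T) (hc : HasContent μ ν T c) {i j : ℕ} (hij : ν i ≤ j) (hji : j < μ i) :
    1 ≤ c (T i j) := by
  rw [← (hasContent_iff_sum_rowCount hN).1 hc _ (hT.2.1 i j hij hji)]
  have hrow : 1 ≤ rowCount μ ν T (T i j) i := card_pos.2 ⟨j, mem_rowCols.2 ⟨hij, hji, rfl⟩⟩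
  exact hrow.trans (single_le_sum (fun _ _ => Nat.zero_le _)
    (mem_range.2 (row_lt_of_col_lt hN hji)))

theorem exists_content_eq_zero (hN : ∀ i, N ≤ i → μ i = 0) {T : ℕ → ℕ → ℕ} {c : ℕ → ℕ}
    (hc : HasContent μ ν T c) : ∃ B, ∀ s, B ≤ s → c s = 0 := by
  set B := (range N).sup fun i => (range (μ i)).sup (T i)
  refine ⟨B + 1, fun s hs => ?_⟩
  rw [← (hasContent_iff_sum_rowCount hN).1 hc s (by omega)]
  refine sum_eq_zero fun i hi => card_eq_zero.2 (eq_empty_of_forall_notMem fun j hj => ?_)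
  obtain ⟨-, hjμ, rfl⟩ := mem_rowCols.1 hj
  have : T i j ≤ B :=
    (le_sup (f := T i) (mem_range.2 hjμ)).trans (le_sup (f := fun i => (range (μ i)).sup (T i)) hi)
  omega

theorem finite_tableaux (hN : ∀ i, N ≤ i → μ i = 0) (c : ℕ → ℕ) :
    Finite {T : ℕ → ℕ → ℕ // IsSkewSSYT μ ν T ∧ HasContent μ ν T c} := by
  rcases isEmpty_or_nonempty {T : ℕ → ℕ → ℕ // IsSkewSSYT μ ν T ∧ HasContent μ ν T c} with
    h | ⟨⟨T₀, -, hc₀⟩⟩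
  · infer_instance
  obtain ⟨B, hB⟩ := exists_content_eq_zero hN hc₀
  set M := (range N).sup μ
  have hshape : ∀ i j, j < μ i → i < N ∧ j < M := fun i j hji =>
    ⟨row_lt_of_col_lt hN hji, hji.trans_le (le_sup (mem_range.2 (row_lt_of_col_lt hN hji)))⟩
  have hbound : ∀ T : {T : ℕ → ℕ → ℕ // IsSkewSSYT μ ν T ∧ HasContent μ ν T c}, ∀ i j,
      T.1 i j < B + 1 := by
    rintro ⟨T, hT, hc⟩ i j
    show T i j < B + 1
    by_cases hij : ν i ≤ j ∧ j < μ i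
    · have h1 := one_le_content_of_mem hN hT hc hij.1 hij.2
      by_contra! hB'
      have := hB (T i j) (by omega)
      omega
    · simp [hT.1 i j hij]
  refine Finite.of_injective (β := Fin N × Fin M → Fin (B + 1))
    (fun T p => ⟨T.1 p.1 p.2, hbound T p.1 p.2⟩) fun T₁ T₂ h => Subtype.ext (funext₂ fun i j => ?_)
  by_cases hij : ν i ≤ j ∧ j < μ i
  · obtain ⟨hiN, hjM⟩ := hshape i j hij.2
    exact congrArg Fin.val (congrFun h (⟨i, hiN⟩, ⟨j, hjM⟩))
  · rw [T₁.2.1.1 i j hij, T₂.2.1.1 i j hij]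

end Tableau

def setCell (T : ℕ → ℕ → ℕ) (p : ℕ × ℕ) (v : ℕ) : ℕ → ℕ → ℕ :=
  fun i j => if (i, j) = p then v else T i j

theorem setCell_setCell_self (T : ℕ → ℕ → ℕ) (p : ℕ × ℕ) (v : ℕ) :
    setCell (setCell T p v) p (T p.1 p.2) = T := by
  funext i j
  by_cases h : (i, j) = p
  · subst h; simp [setCell]
  · simp [setCell, h]

def moveUnit (c : ℕ → ℕ) (t : ℕ) : ℕ → ℕ :=
  fun s => if s = t then c t - 1 else if s = t + 1 then c (t + 1) + 1 else c s

theorem moveUnit_add {c : ℕ → ℕ} {t : ℕ} (hct : 1 ≤ c t) (s : ℕ) :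
    moveUnit c t s + (if s = t then 1 else 0) = c s + (if s = t + 1 then 1 else 0) := by
  unfold moveUnit
  split_ifs <;> subst_vars <;> omega

section SetCell

variable {μ ν : ℕ → ℕ} {T : ℕ → ℕ → ℕ} {i j v : ℕ}

theorem rowCols_setCell_of_ne {i' : ℕ} (h : i' ≠ i) (s : ℕ) :
    rowCols μ ν (setCell T (i, j) v) i' s = rowCols μ ν T i' s := by
  ext j'
  simp [setCell, h]

theorem rowCols_setCell_self (hij : ν i ≤ j) (hji : j < μ i) (s : ℕ) :
    rowCols μ ν (setCell T (i, j) v) i s =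
      if v = s then insert j (rowCols μ ν T i s) else (rowCols μ ν T i s).erase j := by
  ext j'
  by_cases hj : j' = j
  · subst hj; split_ifs <;> simp [setCell, *]
  · split_ifs <;> simp [setCell, hj]

theorem rowCount_setCell_succ {t : ℕ} (hij : ν i ≤ j) (hji : j < μ i) (hT : T i j = t)
    (s i' : ℕ) :
    rowCount μ ν (setCell T (i, j) (t + 1)) s i' + (if i' = i ∧ s = t then 1 else 0) =
      rowCount μ ν T s i' + (if i' = i ∧ s = t + 1 then 1 else 0) := by
  unfold rowCount
  by_cases hi : i' = i
  · subst hi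
    have hmem : j ∈ rowCols μ ν T i' t := mem_rowCols.2 ⟨hij, hji, hT⟩
    have hnot : j ∉ rowCols μ ν T i' (t + 1) := by simp [hT]
    rw [rowCols_setCell_self hij hji]
    by_cases hs : s = t + 1
    · subst hs; simp [card_insert_of_notMem hnot]
    · by_cases hst : s = t
      · subst hst; simp [card_erase_add_one hmem]
      · have : j ∉ rowCols μ ν T i' s := by simp [hT, Ne.symm hst]
        simp [Ne.symm hs, hs, hst, erase_eq_of_notMem this]
  · simp [rowCols_setCell_of_ne hi, hi]

variable {N : ℕ} {c : ℕ → ℕ} {t : ℕ}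

theorem HasContent.setCell_succ (hN : ∀ i, N ≤ i → μ i = 0) (hT : IsSkewSSYT μ ν T)
    (hc : HasContent μ ν T c) (hij : ν i ≤ j) (hji : j < μ i) (hTt : T i j = t) :
    HasContent μ ν (setCell T (i, j) (t + 1)) (moveUnit c t) := by
  have hiN : i ∈ range N := mem_range.2 (row_lt_of_col_lt hN hji)
  have hct : 1 ≤ c t := hTt ▸ one_le_content_of_mem hN hT hc hij hji
  rw [hasContent_iff_sum_rowCount hN] at hc ⊢
  intro s hs
  have hsum := sum_congr rfl fun i' (_ : i' ∈ range N) => rowCount_setCell_succ hij hji hTt s i'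
  simp only [sum_add_distrib, ite_and, sum_ite_eq', if_pos hiN, hc s hs] at hsum
  have := moveUnit_add hct s
  split_ifs at hsum this <;> omega

theorem IsSkewSSYT.setCell_succ (hT : IsSkewSSYT μ ν T) (hij : ν i ≤ j) (hji : j < μ i)
    (hTt : T i j = t) (hright : ∀ j' ∈ rowCols μ ν T i t, j' ≤ j)
    (hbelow : ν (i + 1) ≤ j → j < μ (i + 1) → T (i + 1) j ≠ t + 1) :
    IsSkewSSYT μ ν (setCell T (i, j) (t + 1)) := by
  obtain ⟨hzero, hpos, hrow, hcol⟩ := hT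
  have hright' : ∀ j', j < j' → j' < μ i → t + 1 ≤ T i j' := by
    intro j' hjj' hj'
    have hle : t ≤ T i j' := hTt ▸ hrow i j j' hij hjj'.le hj'
    have hne : T i j' ≠ t := fun h =>
      (hright j' (mem_rowCols.2 ⟨hij.trans hjj'.le, hj', h⟩)).not_gt hjj'
    omega
  refine ⟨fun i' j' h => ?_, fun i' j' h1 h2 => ?_, fun i' j₁ j₂ h1 h12 h2 => ?_,
    fun i' j' h1 h2 h3 h4 => ?_⟩
  · have hne : (i', j') ≠ (i, j) := by rintro ⟨⟩; exact h ⟨hij, hji⟩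
    simp [setCell, hne, hzero i' j' h]
  · unfold setCell; split_ifs
    · omega
    · exact hpos i' j' h1 h2
  · unfold setCell; split_ifs with ha hb hb
    · omega
    · simp only [Prod.mk.injEq] at ha hb; obtain ⟨rfl, rfl⟩ := ha
      exact hright' j₂ (lt_of_le_of_ne h12 (fun h => hb ⟨rfl, h.symm⟩)) h2
    · simp only [Prod.mk.injEq] at hb; obtain ⟨rfl, rfl⟩ := hb
      have := hrow _ j₁ _ h1 h12 h2; omega
    · exact hrow i' j₁ j₂ h1 h12 h2
  · unfold setCell; split_ifs with ha hb hb
    · simp only [Prod.mk.injEq] at ha hb; omega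
    · simp only [Prod.mk.injEq] at ha; obtain ⟨rfl, rfl⟩ := ha
      have := hcol i' j' h1 h2 h3 h4
      have := hbelow h3 h4
      omega
    · simp only [Prod.mk.injEq] at hb; obtain ⟨rfl, rfl⟩ := hb
      have := hcol i' j' h1 h2 h3 h4; omega
    · exact hcol i' j' h1 h2 h3 h4

theorem IsSkewSSYT.rowCount_le_of_below (hν : ∀ i, ν (i + 1) ≤ ν i) (hT : IsSkewSSYT μ ν T)
    (hright : ∀ j' ∈ rowCols μ ν T i t, j' ≤ j) (hj2 : j < μ (i + 1))
    (hTt : T (i + 1) j = t + 1) :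
    rowCount μ ν T t i ≤ rowCount μ ν T (t + 1) (i + 1) := by
  refine card_le_card fun j' hj' => ?_
  obtain ⟨h1, h2, h3⟩ := mem_rowCols.1 hj'
  have hjj' := hright j' hj'
  have h1' : ν (i + 1) ≤ j' := (hν i).trans h1
  have h2' : j' < μ (i + 1) := lt_of_le_of_lt hjj' hj2
  have hlow := hT.2.2.2 i j' h1 h2 h1' h2'
  have hup := hT.2.2.1 (i + 1) j' j h1' hjj' hj2
  exact mem_rowCols.2 ⟨h1', h2', by omega⟩

end SetCell

section Crystal

variable (μ ν : ℕ → ℕ) (T : ℕ → ℕ → ℕ) (t N : ℕ)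

/-- The signature rule: from the last row where `tabBracket` is maximal on, the `t`s outnumber the
`t + 1`s below them, and `crystalF` turns the rightmost `t` of that row into `t + 1`. After the
change this row is the first maximum, which is how `crystalE` finds the cell again. -/
def tabBracket : ℕ → ℤ := bracket (rowCount μ ν T t) (rowCount μ ν T (t + 1))

noncomputable def crystalFRow : ℕ := lastMax (tabBracket μ ν T t) N

noncomputable def crystalFCol : ℕ := (rowCols μ ν T (crystalFRow μ ν T t N) t).sup id

noncomputable def crystalF : ℕ → ℕ → ℕ :=
  setCell T (crystalFRow μ ν T t N, crystalFCol μ ν T t N) (t + 1)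

noncomputable def crystalERow : ℕ := firstMax (tabBracket μ ν T t) N

noncomputable def crystalECol : ℕ := sInf (rowCols μ ν T (crystalERow μ ν T t N) (t + 1) : Set ℕ)

noncomputable def crystalE : ℕ → ℕ → ℕ :=
  setCell T (crystalERow μ ν T t N, crystalECol μ ν T t N) t

variable {μ ν T t N}

theorem tabBracket_eq_sub (hN : ∀ i, N ≤ i → μ i = 0) {c : ℕ → ℕ} (hc : HasContent μ ν T c)
    (ht : 1 ≤ t) : tabBracket μ ν T t N = c (t + 1) - c t := by
  have hc' := (hasContent_iff_sum_rowCount hN).1 hc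
  have hrowN : rowCount μ ν T (t + 1) N = 0 := by simp [rowCount, rowCols, hN N le_rfl]
  rw [tabBracket, bracket_eq_sub_of_eq_zero _ _ hrowN]
  exact_mod_cast congrArg₂ (fun x y : ℕ => (x : ℤ) - y) (hc' (t + 1) (by omega)) (hc' t ht)

theorem crystalFRow_lt (hneg : tabBracket μ ν T t N < 0) : crystalFRow μ ν T t N < N := by
  have h0 : (0 : ℤ) ≤ tabBracket μ ν T t 0 := by simp [tabBracket, bracket_zero]
  refine lt_of_le_of_ne (lastMax_le _ N) fun h => ?_
  have := isMaxUpTo_lastMax (tabBracket μ ν T t) N 0 (Nat.zero_le N)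
  rw [← crystalFRow, h] at this
  omega

theorem rowCount_succ_lt_crystalFRow (hneg : tabBracket μ ν T t N < 0) :
    rowCount μ ν T (t + 1) (crystalFRow μ ν T t N + 1) <
      rowCount μ ν T t (crystalFRow μ ν T t N) := by
  have hlt : tabBracket μ ν T t (crystalFRow μ ν T t N + 1) <
      tabBracket μ ν T t (crystalFRow μ ν T t N) :=
    lt_lastMax_of_lastMax_lt (Nat.lt_succ_self _) (crystalFRow_lt hneg)
  rw [tabBracket, bracket_succ] at hlt
  omega

theorem crystalFCol_mem (hneg : tabBracket μ ν T t N < 0) :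
    crystalFCol μ ν T t N ∈ rowCols μ ν T (crystalFRow μ ν T t N) t := by
  have hne : (rowCols μ ν T (crystalFRow μ ν T t N) t).Nonempty :=
    card_pos.1 (Nat.zero_lt_of_lt (rowCount_succ_lt_crystalFRow hneg))
  obtain ⟨j, hj, hjmax⟩ := exists_mem_eq_sup _ hne id
  rw [crystalFCol, hjmax]
  exact hj

theorem le_crystalFCol {j : ℕ} (hj : j ∈ rowCols μ ν T (crystalFRow μ ν T t N) t) :
    j ≤ crystalFCol μ ν T t N :=
  le_sup (f := id) hj

theorem isSkewSSYT_crystalF (hν : ∀ i, ν (i + 1) ≤ ν i) (hT : IsSkewSSYT μ ν T)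
    (hneg : tabBracket μ ν T t N < 0) : IsSkewSSYT μ ν (crystalF μ ν T t N) := by
  obtain ⟨h1, h2, h3⟩ := mem_rowCols.1 (crystalFCol_mem hneg)
  refine hT.setCell_succ h1 h2 h3 (fun _ => le_crystalFCol) fun _ hj hb => ?_
  exact (hT.rowCount_le_of_below hν (fun _ => le_crystalFCol) hj hb).not_gt
    (rowCount_succ_lt_crystalFRow hneg)

theorem hasContent_crystalF (hN : ∀ i, N ≤ i → μ i = 0) (hT : IsSkewSSYT μ ν T) {c : ℕ → ℕ}
    (hc : HasContent μ ν T c) (hneg : tabBracket μ ν T t N < 0) :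
    HasContent μ ν (crystalF μ ν T t N) (moveUnit c t) := by
  obtain ⟨h1, h2, h3⟩ := mem_rowCols.1 (crystalFCol_mem hneg)
  exact hc.setCell_succ hN hT h1 h2 h3

theorem tabBracket_crystalF (hneg : tabBracket μ ν T t N < 0) (k : ℕ) :
    tabBracket μ ν (crystalF μ ν T t N) t k = tabBracket μ ν T t k +
      (if crystalFRow μ ν T t N ≤ k then 1 else 0) +
      (if crystalFRow μ ν T t N < k then 1 else 0) := by
  obtain ⟨h1, h2, h3⟩ := mem_rowCols.1 (crystalFCol_mem hneg)
  have hrow := rowCount_setCell_succ h1 h2 h3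
  refine bracket_of_move _ _ (fun i => ?_) (fun i => ?_) k
  · simpa [crystalF] using hrow t i
  · simpa [crystalF] using hrow (t + 1) i

theorem crystalERow_crystalF (hneg : tabBracket μ ν T t N < 0) :
    crystalERow μ ν (crystalF μ ν T t N) t N = crystalFRow μ ν T t N :=
  firstMax_of_bump (tabBracket_crystalF hneg)

theorem crystalECol_crystalF (hT : IsSkewSSYT μ ν T) (hneg : tabBracket μ ν T t N < 0) :
    crystalECol μ ν (crystalF μ ν T t N) t N = crystalFCol μ ν T t N := by
  obtain ⟨h1, h2, h3⟩ := mem_rowCols.1 (crystalFCol_mem hneg)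
  rw [crystalECol, crystalERow_crystalF hneg, crystalF, rowCols_setCell_self h1 h2, if_pos rfl]
  refine IsLeast.csInf_eq ⟨by simp, fun j hj => ?_⟩
  obtain rfl | hj := mem_insert.1 (mem_coe.1 hj)
  · exact le_rfl
  obtain ⟨hj1, hj2, hj3⟩ := mem_rowCols.1 hj
  by_contra! hlt
  have := hT.2.2.1 _ j _ hj1 hlt.le h2
  omega

theorem crystalE_crystalF (hT : IsSkewSSYT μ ν T) (hneg : tabBracket μ ν T t N < 0) :
    crystalE μ ν (crystalF μ ν T t N) t N = T := by
  obtain ⟨-, -, h3⟩ := mem_rowCols.1 (crystalFCol_mem hneg)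
  have := setCell_setCell_self T (crystalFRow μ ν T t N, crystalFCol μ ν T t N) (t + 1)
  dsimp only at this
  rw [h3] at this
  rwa [crystalE, crystalERow_crystalF hneg, crystalECol_crystalF hT hneg]

end Crystal

theorem kostka_le_kostka_moveUnit {μ ν : ℕ → ℕ} {N : ℕ} (hν : ∀ i, ν (i + 1) ≤ ν i)
    (hN : ∀ i, N ≤ i → μ i = 0) {c : ℕ → ℕ} {t : ℕ} (ht : 1 ≤ t) (hct : c (t + 1) < c t) :
    Kostka μ ν c ≤ Kostka μ ν (moveUnit c t) := by
  have := finite_tableaux (ν := ν) hN (moveUnit c t)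
  have hneg : ∀ T : {T : ℕ → ℕ → ℕ // IsSkewSSYT μ ν T ∧ HasContent μ ν T c},
      tabBracket μ ν T.1 t N < 0 := fun T => by
    rw [tabBracket_eq_sub hN T.2.2 ht]
    omega
  refine Nat.card_le_card_of_injective (fun T => ⟨crystalF μ ν T.1 t N,
    isSkewSSYT_crystalF hν T.2.1 (hneg T), hasContent_crystalF hN T.2.1 T.2.2 (hneg T)⟩)
    fun T₁ T₂ h => Subtype.ext ?_
  rw [← crystalE_crystalF T₁.2.1 (hneg T₁), ← crystalE_crystalF T₂.2.1 (hneg T₂)]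
  exact congrArg (crystalE μ ν · t N) (congrArg Subtype.val h)

section Dominance

variable {c lam : ℕ → ℕ}

theorem sum_range_moveUnit_add {t : ℕ} (hct : 1 ≤ c t) (k : ℕ) :
    ∑ s ∈ range k, moveUnit c t s + (if k = t + 1 then 1 else 0) = ∑ s ∈ range k, c s := by
  have h := sum_congr rfl fun s (_ : s ∈ range k) => moveUnit_add hct s
  simp only [sum_add_distrib, sum_ite_eq', mem_range] at h
  split_ifs at h ⊢ <;> omega

theorem sum_range_moveUnit_of_ne {t k : ℕ} (hct : 1 ≤ c t) (hk : k ≠ t + 1) :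
    ∑ s ∈ range k, moveUnit c t s = ∑ s ∈ range k, c s := by
  simpa [hk] using sum_range_moveUnit_add hct k

theorem sum_range_moveUnit_succ {t : ℕ} (hct : 1 ≤ c t) :
    ∑ s ∈ range (t + 1), moveUnit c t s + 1 = ∑ s ∈ range (t + 1), c s := by
  simpa using sum_range_moveUnit_add hct (t + 1)

theorem dominates_moveUnit {t : ℕ} (hct : 1 ≤ c t)
    (hdom : ∀ k, ∑ s ∈ range k, lam s ≤ ∑ s ∈ range k, c s)
    (hlt : ∑ s ∈ range (t + 1), lam s < ∑ s ∈ range (t + 1), c s) (k : ℕ) :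
    ∑ s ∈ range k, lam s ≤ ∑ s ∈ range k, moveUnit c t s := by
  rcases eq_or_ne k (t + 1) with rfl | hk
  · have := sum_range_moveUnit_succ hct
    omega
  · rw [sum_range_moveUnit_of_ne hct hk]
    exact hdom k

theorem excess_moveUnit_lt {t M : ℕ} (hct : 1 ≤ c t)
    (hlt : ∑ s ∈ range (t + 1), lam s < ∑ s ∈ range (t + 1), c s) (htM : t + 1 < M) :
    ∑ k ∈ range M, (∑ s ∈ range k, moveUnit c t s - ∑ s ∈ range k, lam s) <
      ∑ k ∈ range M, (∑ s ∈ range k, c s - ∑ s ∈ range k, lam s) := by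
  have hsucc := sum_range_moveUnit_succ hct
  refine sum_lt_sum (fun k _ => ?_) ⟨t + 1, mem_range.2 htM, by omega⟩
  rcases eq_or_ne k (t + 1) with rfl | hk
  · omega
  · rw [sum_range_moveUnit_of_ne hct hk]

theorem exists_moveUnit_of_dominates {M : ℕ} (hlam : ∀ t, 1 ≤ t → lam (t + 1) ≤ lam t)
    (hlam0 : lam 0 = 0) (hc0 : c 0 = 0) (hdom : ∀ k, ∑ s ∈ range k, lam s ≤ ∑ s ∈ range k, c s)
    (hM : ∀ k, M ≤ k → ∑ s ∈ range k, c s = ∑ s ∈ range k, lam s) (hne : c ≠ lam) :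
    ∃ t, 1 ≤ t ∧ c (t + 1) < c t ∧ ∑ s ∈ range (t + 1), lam s < ∑ s ∈ range (t + 1), c s := by
  set D : ℕ → ℤ := fun k => (∑ s ∈ range k, c s : ℕ) - (∑ s ∈ range k, lam s : ℕ) with hD
  have hD0 : ∀ k, 0 ≤ D k := fun k => by simp only [hD]; have := hdom k; omega
  have hDM : ∀ k, M ≤ k → D k = 0 := fun k hk => by simp only [hD]; rw [hM k hk]; ring
  obtain ⟨k, hk⟩ : ∃ k, 0 < D k := by
    by_contra! h
    refine hne (funext fun s => ?_)
    have h1 := h (s + 1)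
    have h2 := h s
    simp only [hD, sum_range_succ] at h1 h2
    have := hdom s
    have := hdom (s + 1)
    simp only [sum_range_succ] at this
    omega
  have hkM : k ≤ M := by
    by_contra! h
    have := hDM k h.le
    omega
  have hmax := isMaxUpTo_lastMax D M
  have hafter : ∀ j, lastMax D M < j → j ≤ M → D j < D (lastMax D M) :=
    fun _ => lt_lastMax_of_lastMax_lt
  have hle := lastMax_le D M
  generalize lastMax D M = k₀ at hmax hafter hle
  have hk₀ : 0 < D k₀ := hk.trans_le (hmax k hkM)
  have h0 : k₀ ≠ 0 := fun h => by simp [h, hD] at hk₀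
  have h1 : k₀ ≠ 1 := fun h => by simp [h, hD, hc0, hlam0] at hk₀
  have hM' : k₀ + 1 ≤ M := by
    by_contra! h
    have := hDM k₀ (by omega)
    omega
  obtain ⟨t, rfl⟩ : ∃ t, k₀ = t + 1 := ⟨k₀ - 1, by omega⟩
  have hnext := hafter (t + 2) (by omega) hM'
  have hprev := hmax t (by omega)
  simp only [hD, sum_range_succ] at hnext hprev hk₀
  refine ⟨t, by omega, ?_, by simp only [sum_range_succ]; omega⟩
  have := hlam t (by omega)
  omega

end Dominance

theorem kostka_le_of_dominates {μ ν : ℕ → ℕ} {N M : ℕ} (hν : ∀ i, ν (i + 1) ≤ ν i)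
    (hN : ∀ i, N ≤ i → μ i = 0) {lam : ℕ → ℕ} (hlam : ∀ t, 1 ≤ t → lam (t + 1) ≤ lam t)
    (hlam0 : lam 0 = 0) (c : ℕ → ℕ) (hc0 : c 0 = 0)
    (hdom : ∀ k, ∑ s ∈ range k, lam s ≤ ∑ s ∈ range k, c s)
    (hM : ∀ k, M ≤ k → ∑ s ∈ range k, c s = ∑ s ∈ range k, lam s) :
    Kostka μ ν c ≤ Kostka μ ν lam := by
  by_cases hne : c = lam
  · rw [hne]
  obtain ⟨t, ht, hct, hlt⟩ := exists_moveUnit_of_dominates hlam hlam0 hc0 hdom hM hne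
  have hct₁ : 1 ≤ c t := by omega
  have htM : t + 1 < M := by
    by_contra! h
    have := hM _ h
    omega
  calc Kostka μ ν c ≤ Kostka μ ν (moveUnit c t) := kostka_le_kostka_moveUnit hν hN ht hct
    _ ≤ Kostka μ ν lam :=
      kostka_le_of_dominates (M := M) hν hN hlam hlam0 (moveUnit c t)
        (by simp [moveUnit, hc0]; omega) (dominates_moveUnit hct₁ hdom hlt) fun k hk => by
          rw [sum_range_moveUnit_of_ne hct₁ (by omega)]
          exact hM k hk
termination_by ∑ k ∈ range M, (∑ s ∈ range k, c s - ∑ s ∈ range k, lam s)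
decreasing_by exact excess_moveUnit_lt hct₁ hlt htM

theorem stmt_8_general (μ ν : ℕ → ℕ)
    (hν : ∀ i, ν (i + 1) ≤ ν i)
    (hμfin : ∃ N, ∀ i, N ≤ i → μ i = 0)
    (lam lam' : ℕ → ℕ)
    (hlam : ∀ t, 1 ≤ t → lam (t + 1) ≤ lam t)
    (hlam0 : lam 0 = 0) (hlam'0 : lam' 0 = 0)
    (hdom : ∀ k, ∑ t ∈ Finset.range (k + 1), lam t ≤ ∑ t ∈ Finset.range (k + 1), lam' t)
    (hsum : ∃ N, (∀ t, N ≤ t → lam t = 0 ∧ lam' t = 0) ∧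
      ∑ t ∈ Finset.range N, lam t = ∑ t ∈ Finset.range N, lam' t) :
    Kostka μ ν lam' ≤ Kostka μ ν lam ∧ (Kostka μ ν lam' ≠ 0 → Kostka μ ν lam ≠ 0) := by
  obtain ⟨N, hN⟩ := hμfin
  obtain ⟨M, hM, hsumM⟩ := hsum
  have hle : Kostka μ ν lam' ≤ Kostka μ ν lam := by
    refine kostka_le_of_dominates (M := M) hν hN hlam hlam0 lam' hlam'0 (fun k => ?_)
      (fun k hk => ?_)
    · cases k with
      | zero => simp
      | succ k => exact hdom k
    · rw [eventually_constant_sum (fun s hs => (hM s hs).1) hk,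
        eventually_constant_sum (fun s hs => (hM s hs).2) hk, hsumM]
  exact ⟨hle, fun h => by omega⟩

/-- if λ ⪯ λ' in the dominance order (partitions with equal sums, partial
sums of λ' dominating those of λ), then K_{μ/ν}(λ') ≤ K_{μ/ν}(λ); in particular
K_{μ/ν}(λ') ≠ 0 implies K_{μ/ν}(λ) ≠ 0. -/
theorem stmt_8 (μ ν : ℕ → ℕ)
    (hμ : ∀ i, μ (i + 1) ≤ μ i) (hν : ∀ i, ν (i + 1) ≤ ν i)
    (hμfin : ∃ N, ∀ i, N ≤ i → μ i = 0) (hνμ : ∀ i, ν i ≤ μ i)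
    (lam lam' : ℕ → ℕ)
    (hlam : ∀ t, 1 ≤ t → lam (t + 1) ≤ lam t)
    (hlam' : ∀ t, 1 ≤ t → lam' (t + 1) ≤ lam' t)
    (hlam0 : lam 0 = 0) (hlam'0 : lam' 0 = 0)
    (hdom : ∀ k, ∑ t ∈ Finset.range (k + 1), lam t ≤ ∑ t ∈ Finset.range (k + 1), lam' t)
    (hsum : ∃ N, (∀ t, N ≤ t → lam t = 0 ∧ lam' t = 0) ∧
      ∑ t ∈ Finset.range N, lam t = ∑ t ∈ Finset.range N, lam' t) :
    Kostka μ ν lam' ≤ Kostka μ ν lam ∧ (Kostka μ ν lam' ≠ 0 → Kostka μ ν lam ≠ 0) :=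
  stmt_8_general μ ν hν hμfin lam lam' hlam hlam0 hlam'0 hdom hsum
end

section
/- Let W̃ = ℤ^n ⋊ S_n be the extended affine Weyl group of GL_n, with length function ℓ(w₀φ^λ) = Σ_{α ∈ Φ₊, w₀α ∈ Φ₋} |⟨α, λ⟩ + 1| + Σ_{α ∈ Φ₊, w₀α ∈ Φ₊} |⟨α, λ⟩|. Every w ∈ W̃ can be written uniquely as w = x φ^μ y with μ dominant, x, y ∈ S_n, and φ^μ y of minimal length in W₀·(φ^μ y); for this decomposition, ℓ(w) = ℓ(x) + ⟨μ, 2ρ⟩ − ℓ(y), where 2ρ is the sum of positive roots. -/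
/-- The length function on W̃ = ℤ^n ⋊ S_n:
ℓ(w₀ φ^λ) = Σ_{i<j, w₀(i)>w₀(j)} |λ(i) − λ(j) + 1| + Σ_{i<j, w₀(i)<w₀(j)} |λ(i) − λ(j)|.
Here the element w₀ φ^λ is encoded by the pair (w₀, λ). -/
noncomputable def affLen {n : ℕ} (w₀ : Equiv.Perm (Fin n)) (lam : Fin n → ℤ) : ℤ :=
  ∑ p ∈ Finset.univ.filter (fun p : Fin n × Fin n => p.1 < p.2),
    (if w₀ p.2 < w₀ p.1 then |lam p.1 - lam p.2 + 1| else |lam p.1 - lam p.2|)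

/-- (x, μ, y) is the decomposition w = x φ^μ y: μ dominant, φ^μ y of minimal length in
W₀·(φ^μ y), and x φ^μ y = w. Writing w = u φ^lam, one has x φ^μ y = (xy) φ^{μ∘y}, and
z·(φ^μ y) = (zy) φ^{μ∘y}. -/
def IsMinDecomp {n : ℕ} (u : Equiv.Perm (Fin n)) (lam : Fin n → ℤ)
    (t : Equiv.Perm (Fin n) × (Fin n → ℤ) × Equiv.Perm (Fin n)) : Prop :=
  (∀ i j : Fin n, i ≤ j → t.2.1 j ≤ t.2.1 i) ∧
  (∀ z : Equiv.Perm (Fin n),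
    affLen t.2.2 (t.2.1 ∘ ⇑t.2.2) ≤ affLen (z * t.2.2) (t.2.1 ∘ ⇑t.2.2)) ∧
  u = t.1 * t.2.2 ∧ lam = t.2.1 ∘ ⇑t.2.2


/-! Each pair `i < j` contributes to `ℓ(w φ^λ)` either `|λ i - λ j + 1|` or `|λ i - λ j|`,
according to whether `w` inverts it, and the first is the smaller one exactly when
`λ i < λ j`. Hence the minimal-length elements of the coset `W₀ φ^λ` are the `y φ^λ` whose
inversions are exactly the ascents of `λ`, and there is exactly one such `y`: the inverse of the
stable sort of `λ` into decreasing order, which makes `μ = λ ∘ y⁻¹` dominant. For this `y`, the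
pair `i < j` contributes `⟨α, μ⟩ + [x inverts α] - [y inverts (i, j)]` to `ℓ(x φ^μ y)`, where
`α` is the positive root on `{y i, y j}`; as `y` permutes the positive roots up to sign, these
sum to `⟨μ, 2ρ⟩ + ℓ(x) - ℓ(y)`. -/

open Finset OrderDual

lemma Equiv.sum_filter_lt_min_max {α β M : Type*} [Fintype α] [LinearOrder α] [Fintype β]
    [LinearOrder β] [AddCommMonoid M] (e : α ≃ β) (H : β → β → M) :
    ∑ p ∈ univ.filter (fun p : α × α => p.1 < p.2),
        H (min (e p.1) (e p.2)) (max (e p.1) (e p.2)) =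
      ∑ p ∈ univ.filter (fun p : β × β => p.1 < p.2), H p.1 p.2 := by
  refine Finset.sum_nbij' (fun p => (min (e p.1) (e p.2), max (e p.1) (e p.2)))
    (fun p => (min (e.symm p.1) (e.symm p.2), max (e.symm p.1) (e.symm p.2))) ?_ ?_ ?_ ?_
    fun _ _ => rfl
  all_goals intro p hp; replace hp : p.1 < p.2 := by simpa using hp
  · simpa using e.injective.ne hp.ne'
  · simpa using e.symm.injective.ne hp.ne'
  · rcases lt_or_gt_of_ne (e.injective.ne hp.ne) with h | h <;> simp [h.le, hp.le]
  · rcases lt_or_gt_of_ne (e.symm.injective.ne hp.ne) with h | h <;> simp [h.le, hp.le]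

lemma ite_abs_eq_min_iff (P : Prop) [Decidable P] (d : ℤ) :
    (if P then |d + 1| else |d|) = min |d + 1| |d| ↔ (P ↔ d < 0) := by
  rcases abs_cases (d + 1) with ⟨h1, _⟩ | ⟨h1, _⟩ <;> rcases abs_cases d with ⟨h2, _⟩ | ⟨h2, _⟩ <;>
    by_cases hP : P <;> simp only [hP, if_true, if_false, h1, h2, true_iff, false_iff] <;> omega

section

variable {n : ℕ}

def InversionsEqAscents (y : Equiv.Perm (Fin n)) (lam : Fin n → ℤ) : Prop :=
  ∀ i j, i < j → (y j < y i ↔ lam i < lam j)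

noncomputable def minAffLen (lam : Fin n → ℤ) : ℤ :=
  ∑ p ∈ univ.filter (fun p : Fin n × Fin n => p.1 < p.2),
    min |lam p.1 - lam p.2 + 1| |lam p.1 - lam p.2|

lemma minAffLen_le_affLen (w : Equiv.Perm (Fin n)) (lam : Fin n → ℤ) :
    minAffLen lam ≤ affLen w lam :=
  sum_le_sum fun _ _ => by split_ifs <;> simp

lemma affLen_eq_minAffLen_iff (w : Equiv.Perm (Fin n)) (lam : Fin n → ℤ) :
    affLen w lam = minAffLen lam ↔ InversionsEqAscents w lam := by
  rw [eq_comm, minAffLen, affLen, sum_eq_sum_iff_of_le fun _ _ => by split_ifs <;> simp]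
  simp only [mem_filter, mem_univ, true_and, Prod.forall, InversionsEqAscents]
  refine forall₂_congr fun i j => imp_congr_right fun _ => ?_
  rw [eq_comm, ite_abs_eq_min_iff, sub_neg]

lemma inversionsEqAscents_iff_inv_eq_sort (y : Equiv.Perm (Fin n)) (lam : Fin n → ℤ) :
    InversionsEqAscents y lam ↔ y⁻¹ = Tuple.sort (toDual ∘ lam) := by
  rw [Tuple.eq_sort_iff, Function.comp_assoc, monotone_toDual_comp_iff, antitone_iff_forall_lt]
  simp only [Function.comp_apply, toDual_inj, Equiv.Perm.coe_inv]
  constructor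
  · intro h
    refine ⟨fun a b hab => ?_, fun a b hab heq => ?_⟩
    · rcases lt_or_gt_of_ne (y.symm.injective.ne hab.ne) with hlt | hgt
      · simpa using mt (h _ _ hlt).2 (by simpa using hab.not_gt)
      · exact ((h _ _ hgt).1 (by simpa using hab)).le
    · by_contra hc
      have hgt := lt_of_le_of_ne (not_lt.1 hc) (y.symm.injective.ne hab.ne')
      exact ((h _ _ hgt).1 (by simpa using hab)).ne heq.symm
  · rintro ⟨hanti, hties⟩ i j hij
    constructor
    · intro hji
      refine lt_of_le_of_ne (by simpa using hanti hji) fun heq => ?_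
      exact hij.not_gt (by simpa using hties _ _ hji (by simp [heq]))
    · intro hlt
      by_contra hc
      exact hlt.not_ge (by simpa using hanti (lt_of_le_of_ne (not_lt.1 hc) (y.injective.ne hij.ne)))

lemma affLen_le_mul_iff (y : Equiv.Perm (Fin n)) (lam : Fin n → ℤ) :
    (∀ z, affLen y lam ≤ affLen (z * y) lam) ↔ InversionsEqAscents y lam := by
  set s := Tuple.sort (toDual ∘ lam)
  have hsort : InversionsEqAscents s⁻¹ lam :=
    (inversionsEqAscents_iff_inv_eq_sort _ _).2 (inv_inv _)
  rw [← affLen_eq_minAffLen_iff]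
  refine ⟨fun h => le_antisymm ?_ (minAffLen_le_affLen y lam),
    fun h z => h ▸ minAffLen_le_affLen _ lam⟩
  have := h (s⁻¹ * y⁻¹)
  rwa [inv_mul_cancel_right, (affLen_eq_minAffLen_iff _ _).2 hsort] at this

lemma isMinDecomp_iff (u : Equiv.Perm (Fin n)) (lam : Fin n → ℤ)
    (t : Equiv.Perm (Fin n) × (Fin n → ℤ) × Equiv.Perm (Fin n)) :
    IsMinDecomp u lam t ↔ t = (u * Tuple.sort (toDual ∘ lam), lam ∘ Tuple.sort (toDual ∘ lam),
      (Tuple.sort (toDual ∘ lam))⁻¹) := by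
  obtain ⟨x, μ, y⟩ := t
  constructor
  · rintro ⟨-, hmin, rfl, rfl⟩
    rw [affLen_le_mul_iff, inversionsEqAscents_iff_inv_eq_sort] at hmin
    rw [← hmin]
    ext <;> simp
  · intro h
    simp only [Prod.mk.injEq] at h
    obtain ⟨rfl, rfl, rfl⟩ := h
    set s := Tuple.sort (toDual ∘ lam)
    have hcomp : (lam ∘ s) ∘ ⇑s⁻¹ = lam := by ext; simp
    refine ⟨monotone_toDual_comp_iff.1 (Tuple.monotone_sort _), ?_, by simp, hcomp.symm⟩
    rw [hcomp, affLen_le_mul_iff, inversionsEqAscents_iff_inv_eq_sort, inv_inv]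

lemma affLen_zero (w : Equiv.Perm (Fin n)) :
    affLen w 0 = ∑ p ∈ univ.filter (fun p : Fin n × Fin n => p.1 < p.2),
      if w p.2 < w p.1 then 1 else 0 := by
  simp [affLen]

lemma affLen_mul_comp (x y : Equiv.Perm (Fin n)) (μ : Fin n → ℤ)
    (hy : InversionsEqAscents y (μ ∘ y)) :
    affLen (x * y) (μ ∘ y) = affLen x 0 +
      (∑ p ∈ univ.filter (fun p : Fin n × Fin n => p.1 < p.2), (μ p.1 - μ p.2)) - affLen y 0 := by
  set H : Fin n → Fin n → ℤ := fun a b => μ a - μ b + if x b < x a then 1 else 0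
  have hterm : ∀ i j, i < j →
      (if x (y j) < x (y i) then |μ (y i) - μ (y j) + 1| else |μ (y i) - μ (y j)|) =
        H (min (y i) (y j)) (max (y i) (y j)) - if y j < y i then 1 else 0 := by
    intro i j hij
    have hμ := hy i j hij
    simp only [Function.comp_apply] at hμ
    rcases lt_or_gt_of_ne (y.injective.ne hij.ne) with hlt | hgt
    · simp only [H, min_eq_left hlt.le, max_eq_right hlt.le, if_neg hlt.not_gt]
      have hμle := mt hμ.2 hlt.not_gt
      split_ifs <;> rcases abs_cases (μ (y i) - μ (y j) + 1) with ⟨_, _⟩ | ⟨_, _⟩ <;>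
        rcases abs_cases (μ (y i) - μ (y j)) with ⟨_, _⟩ | ⟨_, _⟩ <;> omega
    · simp only [H, min_eq_right hgt.le, max_eq_left hgt.le, if_pos hgt]
      have hμlt := hμ.1 hgt
      have hx := x.injective.ne (y.injective.ne hij.ne)
      split_ifs <;> rcases abs_cases (μ (y i) - μ (y j) + 1) with ⟨_, _⟩ | ⟨_, _⟩ <;>
        rcases abs_cases (μ (y i) - μ (y j)) with ⟨_, _⟩ | ⟨_, _⟩ <;> omega
  calc affLen (x * y) (μ ∘ y)
      = ∑ p ∈ univ.filter (fun p : Fin n × Fin n => p.1 < p.2),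
          (H (min (y p.1) (y p.2)) (max (y p.1) (y p.2)) - if y p.2 < y p.1 then 1 else 0) :=
        sum_congr rfl fun p hp => hterm _ _ (by simpa using hp)
    _ = ∑ p ∈ univ.filter (fun p : Fin n × Fin n => p.1 < p.2), H p.1 p.2 - affLen y 0 := by
        rw [sum_sub_distrib, Equiv.sum_filter_lt_min_max, affLen_zero]
    _ = _ := by
        simp only [H, sum_add_distrib, affLen_zero]
        ring

end

theorem stmt_9_general (n : ℕ) (u : Equiv.Perm (Fin n)) (lam : Fin n → ℤ) :
    (∃! t : Equiv.Perm (Fin n) × (Fin n → ℤ) × Equiv.Perm (Fin n),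
        IsMinDecomp u lam t) ∧
    (∀ t : Equiv.Perm (Fin n) × (Fin n → ℤ) × Equiv.Perm (Fin n), IsMinDecomp u lam t →
      affLen u lam = affLen t.1 0 +
        (∑ p ∈ Finset.univ.filter (fun p : Fin n × Fin n => p.1 < p.2),
          (t.2.1 p.1 - t.2.1 p.2)) - affLen t.2.2 0) := by
  refine ⟨⟨_, (isMinDecomp_iff u lam _).2 rfl, fun t ht => (isMinDecomp_iff u lam t).1 ht⟩, ?_⟩
  rintro ⟨x, μ, y⟩ ht
  obtain ⟨-, hmin, rfl, rfl⟩ := ht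
  exact affLen_mul_comp x y μ ((affLen_le_mul_iff y _).1 hmin)

/-- every w = u φ^lam ∈ W̃ admits a unique decomposition w = x φ^μ y with
μ dominant and φ^μ y of minimal length in its coset W₀·(φ^μ y); for this decomposition
ℓ(w) = ℓ(x) + ⟨μ, 2ρ⟩ − ℓ(y). -/
theorem stmt_9 (n : ℕ) (hn : 0 < n) (u : Equiv.Perm (Fin n)) (lam : Fin n → ℤ) :
    (∃! t : Equiv.Perm (Fin n) × (Fin n → ℤ) × Equiv.Perm (Fin n),
        IsMinDecomp u lam t) ∧
    (∀ t : Equiv.Perm (Fin n) × (Fin n → ℤ) × Equiv.Perm (Fin n), IsMinDecomp u lam t →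
      affLen u lam = affLen t.1 0 +
        (∑ p ∈ Finset.univ.filter (fun p : Fin n × Fin n => p.1 < p.2),
          (t.2.1 p.1 - t.2.1 p.2)) - affLen t.2.2 0) :=
  stmt_9_general n u lam
end

section
/- Let w = x φ^μ y ∈ W̃ with μ dominant, x, y ∈ W₀ and φ^μ y ∈ ^S W̃. Define LP(w) = {v ∈ W₀ : ⟨vα, y^{-1}μ⟩ + δ⁺(vα) − δ⁺(xyvα) ≥ 0 for all α ∈ Φ₊}, where δ⁺ is the indicator function of positive roots. Then y^{-1} ∈ LP(w); in particular LP(w) is nonempty. -/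
/-! Since `y⁻¹` is injective, exactly one of `y⁻¹ i < y⁻¹ j` and `y⁻¹ j < y⁻¹ i` holds for
`i < j`. Hence the condition `φ^μ y ∈ ^S W̃` gives
`⟨χ_{ij}, μ⟩ + δ⁺(y⁻¹χ_{ij}) ≥ δ⁺(−y⁻¹χ_{ij}) + δ⁺(y⁻¹χ_{ij}) = 1 ≥ δ⁺(xχ_{ij})`. -/

lemma ite_lt_add_ite_lt_of_ne {α R : Type*} [LinearOrder α] [AddMonoidWithOne R] {a b : α}
    (h : a ≠ b) : ((if a < b then 1 else 0) + (if b < a then 1 else 0) : R) = 1 := by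
  rcases h.lt_or_gt with h | h <;> simp [h, h.not_gt]

-- Type `A_{n-1}`: the positive roots are `χ_{ij} = e_i − e_j` for `i < j`, and `W₀ = S_n`
-- acts on them by permuting indices.
theorem stmt_10_general (n : ℕ) (μ : Fin n → ℤ) (x y : Equiv.Perm (Fin n))
    (hy : ∀ i j : Fin n, i < j → (if y⁻¹ j < y⁻¹ i then (1 : ℤ) else 0) ≤ μ i - μ j)
    (LP : Set (Equiv.Perm (Fin n)))
    (hLP : LP = {v | ∀ i j : Fin n, i < j →
      (0 : ℤ) ≤ μ (y (v i)) - μ (y (v j)) + (if v i < v j then 1 else 0) -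
        (if x (y (v i)) < x (y (v j)) then 1 else 0)}) :
    y⁻¹ ∈ LP ∧ LP.Nonempty := by
  have hmem : y⁻¹ ∈ LP := by
    subst hLP
    intro i j hij
    have hsum := ite_lt_add_ite_lt_of_ne (R := ℤ) (y⁻¹.injective.ne hij.ne)
    have hx : (if x i < x j then (1 : ℤ) else 0) ≤ 1 := by split <;> norm_num
    simp only [Equiv.Perm.coe_inv, Equiv.apply_symm_apply] at hy hsum ⊢
    linarith [hy i j hij]
  exact ⟨hmem, y⁻¹, hmem⟩

/-- for w = x φ^μ y with μ dominant and φ^μ y ∈ ^S W̃ (characterized by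
⟨α, μ⟩ ≥ δ⁺(−y⁻¹α) for all positive roots α = χ_{ij}, i < j), the element y⁻¹ lies in
LP(w) = {v : ⟨vα, y⁻¹μ⟩ + δ⁺(vα) − δ⁺(xyvα) ≥ 0 for all α ∈ Φ₊}; in particular LP(w)
is nonempty. Here (y⁻¹μ)(t) = μ(y t), vχ_{ij} = χ_{v(i),v(j)}. -/
theorem stmt_10 (n : ℕ) (μ : Fin n → ℤ) (x y : Equiv.Perm (Fin n))
    (hdom : ∀ i j : Fin n, i ≤ j → μ j ≤ μ i)
    (hy : ∀ i j : Fin n, i < j → (if y⁻¹ j < y⁻¹ i then (1 : ℤ) else 0) ≤ μ i - μ j)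
    (LP : Set (Equiv.Perm (Fin n)))
    (hLP : LP = {v | ∀ i j : Fin n, i < j →
      (0 : ℤ) ≤ μ (y (v i)) - μ (y (v j)) + (if v i < v j then 1 else 0) -
        (if x (y (v i)) < x (y (v j)) then 1 else 0)}) :
    y⁻¹ ∈ LP ∧ LP.Nonempty :=
  stmt_10_general n μ x y hy LP hLP
end

section
/- Let w = x φ^μ y ∈ W̃ with μ dominant, x, y ∈ W₀, φ^μ y ∈ ^S W̃, and set Φ_w = {α ∈ Φ₊ : ⟨α, μ⟩ − δ⁻(y^{-1}α) + δ⁻(xα) = 0}, where δ⁻ is the indicator of negative roots. Then y·LP(w) = {r^{-1} ∈ W₀ : r(Φ₊ \ Φ_w) ⊆ Φ₊}, where LP(w) = {v ∈ W₀ : ⟨vα, y^{-1}μ⟩ + δ⁺(vα) − δ⁺(xyvα) ≥ 0 for all α ∈ Φ₊}. -/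
/-!
View the expression defining `LP(w)` as a function `F` of the root `e_a - e_b`. It is
antisymmetric, the hypothesis on `y` makes it nonnegative on positive roots, and on a positive
root it vanishes exactly on `Φ_w`. Hence `u = y v` lies in `y·LP(w)` iff `F ≥ 0` on `u(Φ₊)`,
i.e. iff `u⁻¹` keeps every positive root with `F ≠ 0` positive.
-/

open Equiv

theorem forall_nonneg_perm_apply_iff {α G : Type*} [LinearOrder α] [AddCommGroup G]
    [LinearOrder G] [IsOrderedAddMonoid G] {F : α → α → G} (hanti : ∀ a b, F b a = -F a b)
    (hpos : ∀ a b, a < b → 0 ≤ F a b) (u : Perm α) :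
    (∀ i j, i < j → 0 ≤ F (u i) (u j)) ↔ ∀ a b, a < b → F a b ≠ 0 → u⁻¹ a < u⁻¹ b := by
  constructor
  · intro h a b hab hF
    by_contra hle
    have hlt : u⁻¹ b < u⁻¹ a :=
      (not_lt.mp hle).lt_of_ne fun e => hab.ne' (u⁻¹.injective e)
    have hba := h _ _ hlt
    simp only [Perm.coe_inv, apply_symm_apply, hanti a b, neg_nonneg] at hba
    exact hF (le_antisymm hba (hpos a b hab))
  · intro h i j hij
    rcases (u.injective.ne hij.ne).lt_or_gt with hu | hu
    · exact hpos _ _ hu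
    · by_contra hneg
      have hF : F (u j) (u i) ≠ 0 := by
        rw [hanti]
        exact neg_ne_zero.mpr (not_le.mp hneg).ne
      have hji := h _ _ hu hF
      simp only [Perm.coe_inv, symm_apply_apply] at hji
      exact hji.asymm hij

theorem ite_lt_add_ite_gt {β : Type*} [LinearOrder β] {p q : β} (h : p ≠ q) :
    ((if p < q then 1 else 0) + (if q < p then 1 else 0) : ℤ) = 1 := by
  rcases h.lt_or_gt with h | h <;> simp [h, h.asymm]

section RootWeight

variable {α : Type*} [LinearOrder α] (μ : α → ℤ) (x y : Perm α)

/-- The value of `⟨β, μ⟩ + δ⁺(y⁻¹β) - δ⁺(xβ)` on the root `β = e_a - e_b`. -/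
def rootWeight (a b : α) : ℤ :=
  μ a - μ b + (if y⁻¹ a < y⁻¹ b then 1 else 0) - (if x a < x b then 1 else 0)

variable {μ x y}

theorem rootWeight_eq_of_ne {a b : α} (h : a ≠ b) :
    rootWeight μ x y a b =
      μ a - μ b - (if y⁻¹ b < y⁻¹ a then 1 else 0) + (if x b < x a then 1 else 0) := by
  have hy := ite_lt_add_ite_gt (y⁻¹.injective.ne h)
  have hx := ite_lt_add_ite_gt (x.injective.ne h)
  unfold rootWeight
  linarith

theorem rootWeight_swap (a b : α) : rootWeight μ x y b a = -rootWeight μ x y a b := by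
  by_cases h : a = b
  · subst h
    simp [rootWeight]
  · rw [rootWeight_eq_of_ne h, rootWeight]
    ring

theorem rootWeight_nonneg
    (hy : ∀ i j, i < j → (if y⁻¹ j < y⁻¹ i then (1 : ℤ) else 0) ≤ μ i - μ j)
    {a b : α} (h : a < b) : 0 ≤ rootWeight μ x y a b := by
  rw [rootWeight_eq_of_ne h.ne]
  have := hy a b h
  split_ifs at this ⊢ <;> omega

end RootWeight

theorem rootWeight_apply_apply {n : ℕ} (μ : Fin n → ℤ) (x y v : Perm (Fin n)) (i j : Fin n) :
    rootWeight μ x y (y (v i)) (y (v j)) =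
      μ (y (v i)) - μ (y (v j)) + (if v i < v j then 1 else 0) -
        (if x (y (v i)) < x (y (v j)) then 1 else 0) := by
  simp only [rootWeight, Perm.coe_inv, symm_apply_apply]

theorem stmt_11_general (n : ℕ) (μ : Fin n → ℤ) (x y : Equiv.Perm (Fin n))
    (hy : ∀ i j : Fin n, i < j → (if y⁻¹ j < y⁻¹ i then (1 : ℤ) else 0) ≤ μ i - μ j)
    (LP : Set (Equiv.Perm (Fin n)))
    (hLP : LP = {v | ∀ i j : Fin n, i < j →
      (0 : ℤ) ≤ μ (y (v i)) - μ (y (v j)) + (if v i < v j then 1 else 0) -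
        (if x (y (v i)) < x (y (v j)) then 1 else 0)})
    (Φw : Set (Fin n × Fin n))
    (hΦw : Φw = {p | p.1 < p.2 ∧
      μ p.1 - μ p.2 - (if y⁻¹ p.2 < y⁻¹ p.1 then 1 else 0) +
        (if x p.2 < x p.1 then 1 else 0) = 0}) :
    {u : Equiv.Perm (Fin n) | ∃ v ∈ LP, u = y * v} =
      {u : Equiv.Perm (Fin n) | ∀ i j : Fin n, i < j → (i, j) ∉ Φw → u⁻¹ i < u⁻¹ j} := by
  subst hLP hΦw
  ext u
  simp only [Set.mem_ofPred_eq, ← rootWeight_apply_apply]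
  trans ∀ i j, i < j → 0 ≤ rootWeight μ x y (u i) (u j)
  · constructor
    · rintro ⟨v, hv, rfl⟩
      exact hv
    · intro hu
      exact ⟨y⁻¹ * u, by simpa using hu, by group⟩
  rw [forall_nonneg_perm_apply_iff rootWeight_swap (fun _ _ => rootWeight_nonneg hy)]
  refine forall₂_congr fun i j => forall_congr' fun hij => ?_
  simp [hij, rootWeight_eq_of_ne hij.ne]

/-- with w = x φ^μ y as usual and
Φ_w = {α ∈ Φ₊ : ⟨α, μ⟩ − δ⁻(y⁻¹α) + δ⁻(xα) = 0}, one has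
y·LP(w) = {r⁻¹ : r(Φ₊ \ Φ_w) ⊆ Φ₊}. Roots are encoded as pairs (i,j), i < j. -/
theorem stmt_11 (n : ℕ) (μ : Fin n → ℤ) (x y : Equiv.Perm (Fin n))
    (hdom : ∀ i j : Fin n, i ≤ j → μ j ≤ μ i)
    (hy : ∀ i j : Fin n, i < j → (if y⁻¹ j < y⁻¹ i then (1 : ℤ) else 0) ≤ μ i - μ j)
    (LP : Set (Equiv.Perm (Fin n)))
    (hLP : LP = {v | ∀ i j : Fin n, i < j →
      (0 : ℤ) ≤ μ (y (v i)) - μ (y (v j)) + (if v i < v j then 1 else 0) -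
        (if x (y (v i)) < x (y (v j)) then 1 else 0)})
    (Φw : Set (Fin n × Fin n))
    (hΦw : Φw = {p | p.1 < p.2 ∧
      μ p.1 - μ p.2 - (if y⁻¹ p.2 < y⁻¹ p.1 then 1 else 0) +
        (if x p.2 < x p.1 then 1 else 0) = 0}) :
    {u : Equiv.Perm (Fin n) | ∃ v ∈ LP, u = y * v} =
      {u : Equiv.Perm (Fin n) | ∀ i j : Fin n, i < j → (i, j) ∉ Φw → u⁻¹ i < u⁻¹ j} :=
  stmt_11_general n μ x y hy LP hLP Φw hΦw
end

section
/- Let n ≥ 9 and 4 ≤ i ≤ n−4, and let y = (1 i+1 i+3 i+4 ⋯ n i i−2 ⋯ 3 2)(i−1 i+2) ∈ S_n. For r ∈ S_n, if r y r^{-1} lies in a proper standard parabolic subgroup of S_n (i.e., in W_J for some proper subset J of the simple reflections), then the transposition (r(i−1), r(i+2)) equals (1,2) or (n−1, n). -/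
/-! The conjugate `r y r⁻¹` maps `S = {1,…,k}` into itself, hence onto itself, so
`r (y x) ∈ S ↔ r x ∈ S`: membership of `r x` in `S` is constant on each cycle of `y`. On
`{1,…,n}` the cycles of `y` are the `(n-2)`-cycle `l` and the transposition `(i-1 i+2)`. As
`S` and its complement in `{1,…,n}` are both nonempty, `r` maps one cycle onto `S` and the other
onto the complement; counting, either `k = 2` and `r` sends `{i-1, i+2}` onto `{1, 2}`, or
`k = n - 2` and it sends it onto `{n-1, n}`. -/

open Finset

namespace Equiv.Perm

variable {α : Type*}

theorem apply_mem_iff_of_forall_mem {σ : Perm α} {s : Finset α} (h : ∀ x ∈ s, σ x ∈ s)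
    (x : α) : σ x ∈ s ↔ x ∈ s := by
  refine ⟨fun hσx => ?_, h x⟩
  have hmap : s.map σ.toEmbedding = s :=
    map_eq_of_subset fun _ hv => by
      obtain ⟨w, hw, rfl⟩ := mem_map.1 hv
      exact h w hw
  obtain ⟨w, hw, hwx⟩ := mem_map.1 (hmap ▸ hσx)
  rwa [← σ.injective hwx]

theorem apply_apply_mem_iff_of_conj {r σ : Perm α} {s : Finset α}
    (h : ∀ x ∈ s, (r * σ * r⁻¹) x ∈ s) (x : α) : r (σ x) ∈ s ↔ r x ∈ s := by
  simpa using apply_mem_iff_of_forall_mem h (r x)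

theorem SameCycle.iff_of_forall_apply_iff {f : Perm α} {p : α → Prop}
    (hp : ∀ x, p (f x) ↔ p x) {x y : α} (h : f.SameCycle x y) : p x ↔ p y := by
  obtain ⟨j, rfl⟩ := h
  induction j using Int.induction_on with
  | zero => simp
  | succ j ih => rw [add_comm, zpow_one_add, mul_apply, hp, ih]
  | pred j ih =>
    rw [ih, sub_eq_neg_add, zpow_add, zpow_neg_one, mul_apply, ← hp (f⁻¹ _)]
    simp

end Equiv.Perm

namespace List

variable {α : Type*} [DecidableEq α]

theorem formPerm_mul_swap_apply_of_mem {l : List α} {a b x : α} (ha : a ∉ l) (hb : b ∉ l)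
    (hx : x ∈ l) : (l.formPerm * Equiv.swap a b) x = l.formPerm x := by
  rw [Equiv.Perm.mul_apply, Equiv.swap_apply_of_ne_of_ne (ne_of_mem_of_not_mem hx ha)
    (ne_of_mem_of_not_mem hx hb)]

theorem formPerm_mul_swap_apply_left {l : List α} {a b : α} (hb : b ∉ l) :
    (l.formPerm * Equiv.swap a b) a = b := by
  rw [Equiv.Perm.mul_apply, Equiv.swap_apply_left, formPerm_apply_of_notMem hb]

theorem Nodup.iff_of_mem_of_forall_apply_iff {l : List α} (hl : l.Nodup) (h2 : 2 ≤ l.length)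
    {σ : Equiv.Perm α} (hσ : ∀ x ∈ l, σ x = l.formPerm x) {p : α → Prop}
    (hp : ∀ x, p (σ x) ↔ p x) {x w : α} (hx : x ∈ l) (hw : w ∈ l) : p x ↔ p w := by
  have hform : ∀ v, p (l.formPerm v) ↔ p v := fun v => by
    by_cases hv : v ∈ l
    · rw [← hσ v hv, hp]
    · rw [formPerm_apply_of_notMem hv]
  have hmoved : ∀ v ∈ l, l.formPerm v ≠ v := fun v hv =>
    (formPerm_apply_mem_ne_self_iff l hl v hv).2 h2
  exact ((isCycle_formPerm hl h2).sameCycle (hmoved x hx) (hmoved w hw)).iff_of_forall_apply_iff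
    hform

end List

def longCycle (n i : ℕ) : List ℕ :=
  1 :: (i + 1) :: (List.range' (i + 3) (n - i - 2) ++ i :: (List.range' 2 (i - 3)).reverse)

section longCycle

variable {n i : ℕ}

theorem mem_longCycle (hi : 3 ≤ i) (hin : i + 2 ≤ n) {x : ℕ} :
    x ∈ longCycle n i ↔ x ∈ Icc 1 n ∧ x ≠ i - 1 ∧ x ≠ i + 2 := by
  simp only [longCycle, List.mem_cons, List.mem_append, List.mem_reverse, List.mem_range'_1,
    mem_Icc]
  omega

theorem nodup_longCycle (hi : 3 ≤ i) : (longCycle n i).Nodup := by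
  simp only [longCycle, List.nodup_cons, List.mem_cons, List.mem_append, List.mem_reverse,
    List.mem_range'_1, List.nodup_append, List.nodup_reverse, not_or]
  exact ⟨by omega, by omega, List.nodup_range', ⟨by omega, List.nodup_range'⟩, fun _ _ => by omega⟩

theorem length_longCycle (hi : 3 ≤ i) (hin : i + 2 ≤ n) : (longCycle n i).length = n - 2 := by
  simp only [longCycle, List.length_cons, List.length_append, List.length_reverse,
    List.length_range']
  omega

theorem insert_insert_toFinset_longCycle (hi : 3 ≤ i) (hin : i + 2 ≤ n) :
    insert (i - 1) (insert (i + 2) (longCycle n i).toFinset) = Icc 1 n := by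
  ext x
  rw [mem_insert, mem_insert, List.mem_toFinset, mem_longCycle hi hin, mem_Icc]
  omega

end longCycle

theorem pair_eq_first_or_last_of_partition {n k a b : ℕ} {F : Finset ℕ} (hk1 : 1 ≤ k)
    (hkn : k < n) (hpart : insert a (insert b F) = Icc 1 n) (hcard : F.card = n - 2)
    (hF : F ⊆ Icc 1 k ∨ Disjoint F (Icc 1 k)) (hab : a ∈ Icc 1 k ↔ b ∈ Icc 1 k) :
    ({a, b} : Set ℕ) = {1, 2} ∨ ({a, b} : Set ℕ) = {n - 1, n} := by
  have hmem : ∀ x, x ∈ Icc 1 n ↔ x = a ∨ x = b ∨ x ∈ F := by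
    intro x; rw [← hpart, mem_insert, mem_insert]
  have ha := (hmem a).2 (Or.inl rfl)
  have hb := (hmem b).2 (Or.inr (Or.inl rfl))
  have hne : a ≠ b := by
    rintro rfl
    rw [insert_idem] at hpart
    have := card_insert_le a F
    rw [hpart, Nat.card_Icc] at this
    omega
  rw [Set.pair_eq_pair_iff, Set.pair_eq_pair_iff]
  simp only [mem_Icc] at ha hb hab
  rcases hF with hF | hF
  · have hk : n - 2 ≤ k := by simpa [hcard] using card_le_card hF
    have hout : ¬ a ≤ k := fun hak => by
      have := (hmem n).1 (mem_Icc.2 ⟨by omega, le_rfl⟩)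
      grind
    omega
  · have hF' : F ⊆ Icc (k + 1) n := fun x hx => by
      have hxn := mem_Icc.1 ((hmem x).2 (Or.inr (Or.inr hx)))
      have hxk : x ∉ Icc 1 k := disjoint_left.1 hF hx
      rw [mem_Icc] at hxk ⊢
      omega
    have hk : n - 2 ≤ n + 1 - (k + 1) := by simpa [hcard] using card_le_card hF'
    have hin : a ≤ k := by
      by_contra hak
      have := (hmem 1).1 (mem_Icc.2 ⟨le_rfl, by omega⟩)
      grind [disjoint_left]
    omega

theorem perm_pair_eq_first_or_last_of_partition {n k a b : ℕ} {L : Finset ℕ}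
    {r : Equiv.Perm ℕ} (hk1 : 1 ≤ k) (hkn : k < n) (hr : {x | r x ≠ x} ⊆ Icc 1 n)
    (hpart : insert a (insert b L) = Icc 1 n) (hcard : L.card = n - 2)
    (hL : ∀ x ∈ L, ∀ w ∈ L, r x ∈ Icc 1 k ↔ r w ∈ Icc 1 k)
    (hab : r a ∈ Icc 1 k ↔ r b ∈ Icc 1 k) :
    ({r a, r b} : Set ℕ) = {1, 2} ∨ ({r a, r b} : Set ℕ) = {n - 1, n} := by
  refine pair_eq_first_or_last_of_partition (F := L.map r.toEmbedding) hk1 hkn ?_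
    (by rw [card_map, hcard]) ?_ hab
  · have := congrArg (map r.toEmbedding) hpart
    rwa [map_insert, map_insert, map_perm hr] at this
  · by_cases h : ∃ x ∈ L, r x ∈ Icc 1 k
    · obtain ⟨x₀, hx₀, hrx₀⟩ := h
      refine Or.inl fun v hv => ?_
      obtain ⟨x, hx, rfl⟩ := mem_map.1 hv
      exact (hL x hx x₀ hx₀).2 hrx₀
    · push Not at h
      refine Or.inr (disjoint_left.2 fun v hv => ?_)
      obtain ⟨x, hx, rfl⟩ := mem_map.1 hv
      exact h x hx

theorem stmt_14_general (n i : ℕ) (hi1 : 4 ≤ i) (hi2 : i ≤ n - 4)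
    (l : List ℕ)
    (hl : l = 1 :: (i + 1) ::
      (List.range' (i + 3) (n - i - 2) ++ i :: (List.range' 2 (i - 3)).reverse))
    (y : Equiv.Perm ℕ) (hy : y = l.formPerm * Equiv.swap (i - 1) (i + 2))
    (r : Equiv.Perm ℕ) (hr : ∀ a : ℕ, (a = 0 ∨ n < a) → r a = a)
    (hpar : ∃ k, 1 ≤ k ∧ k ≤ n - 1 ∧
      ∀ a, 1 ≤ a → a ≤ k → 1 ≤ (r * y * r⁻¹) a ∧ (r * y * r⁻¹) a ≤ k) :
    ({r (i - 1), r (i + 2)} : Set ℕ) = {1, 2} ∨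
    ({r (i - 1), r (i + 2)} : Set ℕ) = {n - 1, n} := by
  obtain ⟨k, hk1, hkn, hk⟩ := hpar
  replace hl : l = longCycle n i := hl
  have hi : 3 ≤ i := by omega
  have hin : i + 2 ≤ n := by omega
  have hout : i - 1 ∉ l ∧ i + 2 ∉ l := by simp [hl, mem_longCycle hi hin]
  have hnd : l.Nodup := hl ▸ nodup_longCycle hi
  have hside : ∀ x, r (y x) ∈ Icc 1 k ↔ r x ∈ Icc 1 k :=
    Equiv.Perm.apply_apply_mem_iff_of_conj fun x hx =>
      mem_Icc.2 (hk x (mem_Icc.1 hx).1 (mem_Icc.1 hx).2)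
  have hcycle : ∀ x ∈ l, y x = l.formPerm x := fun x hx => by
    rw [hy, List.formPerm_mul_swap_apply_of_mem hout.1 hout.2 hx]
  refine perm_pair_eq_first_or_last_of_partition (L := l.toFinset) hk1 (by omega) ?_
    (hl ▸ insert_insert_toFinset_longCycle hi hin) ?_ ?_ ?_
  · exact fun x hx => mem_Icc.2 (by by_contra h; exact hx (hr x (by omega)))
  · rw [List.toFinset_card_of_nodup hnd, hl, length_longCycle hi hin]
  · exact fun x hx w hw => hnd.iff_of_mem_of_forall_apply_iff (p := fun x => r x ∈ Icc 1 k)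
      (by rw [hl, length_longCycle hi hin]; omega) hcycle hside
      (List.mem_toFinset.1 hx) (List.mem_toFinset.1 hw)
  · have hpair : y (i - 1) = i + 2 := hy ▸ List.formPerm_mul_swap_apply_left hout.2
    rw [← hpair]
    exact (hside _).symm

/-- let y = (1 i+1 i+3 ⋯ n i i−2 ⋯ 3 2)(i−1 i+2) ∈ S_n (n ≥ 9,
4 ≤ i ≤ n−4). If r ∈ S_n is such that r y r⁻¹ lies in a proper standard parabolic
subgroup (i.e. stabilizes an initial segment {1,…,k} with 1 ≤ k ≤ n−1), then the
transposition (r(i−1), r(i+2)) equals (1,2) or (n−1,n). -/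
theorem stmt_14 (n i : ℕ) (hn : 9 ≤ n) (hi1 : 4 ≤ i) (hi2 : i ≤ n - 4)
    (l : List ℕ)
    (hl : l = 1 :: (i + 1) ::
      (List.range' (i + 3) (n - i - 2) ++ i :: (List.range' 2 (i - 3)).reverse))
    (y : Equiv.Perm ℕ) (hy : y = l.formPerm * Equiv.swap (i - 1) (i + 2))
    (r : Equiv.Perm ℕ) (hr : ∀ a : ℕ, (a = 0 ∨ n < a) → r a = a)
    (hpar : ∃ k, 1 ≤ k ∧ k ≤ n - 1 ∧
      ∀ a, 1 ≤ a → a ≤ k → 1 ≤ (r * y * r⁻¹) a ∧ (r * y * r⁻¹) a ≤ k) :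
    ({r (i - 1), r (i + 2)} : Set ℕ) = {1, 2} ∨
    ({r (i - 1), r (i + 2)} : Set ℕ) = {n - 1, n} :=
  stmt_14_general n i hi1 hi2 l hl y hy r hr hpar
end

section
/- Let n ≥ 5 be odd and μ = ω_2 (the cocharacter (1,1,0,…,0) of GL_n). For 1 ≤ j ≤ (n−3)/2 odd, let λ_j = χ₁,ₙ^∨ + χ₃,ₙ₋₂^∨ + ⋯ + χ_{j,n−j+1}^∨, and for j even let λ_j = χ₂,ₙ₋₁^∨ + χ₄,ₙ₋₃^∨ + ⋯ + χ_{j,n−j+1}^∨, where χ_{a,b}^∨ = e_a − e_b ∈ ℤ^n. Then the semi-module A^{λ_j} equals A_j = (2ℕ − j) ∪ (ℕ + j + 1). -/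
/-- Sum of an indicator over an injective enumeration. -/
lemma ind_sum (m a : ℕ) (g : ℕ → ℕ)
    (hg : ∀ t1, t1 < m → ∀ t2, t2 < m → g t1 = g t2 → t1 = t2) :
    (∑ t ∈ Finset.range m, (if a = g t then (1:ℤ) else 0)) =
      if ∃ t, t < m ∧ a = g t then 1 else 0 := by
  classical
  by_cases h : ∃ t, t < m ∧ a = g t
  · obtain ⟨t0, ht0, ha⟩ := h
    rw [if_pos ⟨t0, ht0, ha⟩, Finset.sum_eq_single t0]
    · rw [if_pos ha]
    · intro b hb hne
      rw [if_neg]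
      intro he
      exact hne (hg b (Finset.mem_range.mp hb) t0 ht0 (by rw [← he, ha]))
    · intro hmem; exact absurd (Finset.mem_range.mpr ht0) hmem
  · rw [if_neg h]
    apply Finset.sum_eq_zero
    intro t ht
    rw [if_neg]
    intro he
    exact h ⟨t, Finset.mem_range.mp ht, he⟩

/-- for odd n ≥ 5, μ = ω₂ and 1 ≤ j ≤ (n−3)/2, the cocharacter
λ_j = χ₁ₙ^∨ + χ₃,ₙ₋₂^∨ + ⋯ + χ_{j,n−j+1}^∨ (j odd), resp.
λ_j = χ₂,ₙ₋₁^∨ + χ₄,ₙ₋₃^∨ + ⋯ + χ_{j,n−j+1}^∨ (j even), where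
χ_{a,b}^∨ = e_a − e_b (1-based coordinates), satisfies
A^{λ_j} = A_j = (2ℕ − j) ∪ (ℕ + j + 1). -/
theorem stmt_15 (n j : ℕ) (hn : 5 ≤ n) (hodd : Odd n) (hj1 : 1 ≤ j)
    (hj2 : 2 * j + 3 ≤ n)
    (lam : ℕ → ℤ)
    (hlam : ∀ a : ℕ, lam a =
      if j % 2 = 1 then
        ∑ t ∈ Finset.range ((j + 1) / 2),
          ((if a = 2 * t + 1 then (1 : ℤ) else 0) - (if a = n - 2 * t then 1 else 0))
      else
        ∑ t ∈ Finset.range (j / 2),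
          ((if a = 2 * t + 2 then (1 : ℤ) else 0) - (if a = n - (2 * t + 1) then 1 else 0))) :
    {x : ℤ | ∃ a : ℕ, 1 ≤ a ∧ a ≤ n ∧ ∃ k : ℕ, x = (a : ℤ) - 1 + lam a * n + k * n} =
      {x : ℤ | ∃ k : ℕ, x = 2 * k - j} ∪ {x : ℤ | ∃ k : ℕ, x = k + j + 1} := by
  classical
  have hodd' : n % 2 = 1 := Nat.odd_iff.mp hodd
  have hchar : ∀ a : ℕ, lam a =
      (if 1 ≤ a ∧ a ≤ j ∧ (a + j) % 2 = 0 then (1:ℤ) else 0) -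
      (if a ≤ n ∧ n < a + j ∧ (a + j) % 2 = 0 then (1:ℤ) else 0) := by
    intro a
    rw [hlam a]
    rcases Nat.mod_two_eq_zero_or_one j with hj | hj
    · rw [if_neg (by omega), Finset.sum_sub_distrib]
      have e1 := ind_sum (j / 2) a (fun t => 2 * t + 2)
        (by intro t1 h1 t2 h2 h; omega)
      have e2 := ind_sum (j / 2) a (fun t => n - (2 * t + 1))
        (by intro t1 h1 t2 h2 h; omega)
      rw [e1, e2]
      have p1 : (∃ t, t < j / 2 ∧ a = 2 * t + 2) ↔ (1 ≤ a ∧ a ≤ j ∧ (a + j) % 2 = 0) := by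
        constructor
        · rintro ⟨t, ht, rfl⟩; omega
        · intro h; exact ⟨a / 2 - 1, by omega, by omega⟩
      have p2 : (∃ t, t < j / 2 ∧ a = n - (2 * t + 1)) ↔
          (a ≤ n ∧ n < a + j ∧ (a + j) % 2 = 0) := by
        constructor
        · rintro ⟨t, ht, rfl⟩; omega
        · intro h; exact ⟨(n - a - 1) / 2, by omega, by omega⟩
      rw [if_congr p1 rfl rfl, if_congr p2 rfl rfl]
    · rw [if_pos hj, Finset.sum_sub_distrib]
      have e1 := ind_sum ((j + 1) / 2) a (fun t => 2 * t + 1)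
        (by intro t1 h1 t2 h2 h; omega)
      have e2 := ind_sum ((j + 1) / 2) a (fun t => n - 2 * t)
        (by intro t1 h1 t2 h2 h; omega)
      rw [e1, e2]
      have p1 : (∃ t, t < (j + 1) / 2 ∧ a = 2 * t + 1) ↔
          (1 ≤ a ∧ a ≤ j ∧ (a + j) % 2 = 0) := by
        constructor
        · rintro ⟨t, ht, rfl⟩; omega
        · intro h; exact ⟨a / 2, by omega, by omega⟩
      have p2 : (∃ t, t < (j + 1) / 2 ∧ a = n - 2 * t) ↔
          (a ≤ n ∧ n < a + j ∧ (a + j) % 2 = 0) := by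
        constructor
        · rintro ⟨t, ht, rfl⟩; omega
        · intro h; exact ⟨(n - a) / 2, by omega, by omega⟩
      rw [if_congr p1 rfl rfl, if_congr p2 rfl rfl]
  ext x
  simp only [Set.mem_setOf_eq, Set.mem_union]
  constructor
  · rintro ⟨a, ha1, han, k, hx⟩
    have hc := hchar a
    have hKn : (k:ℤ) * (n:ℤ) = 0 ∨ (n:ℤ) ≤ (k:ℤ) * (n:ℤ) := by
      rcases Nat.eq_zero_or_pos k with h | h
      · left; rw [h]; norm_num
      · right; exact_mod_cast Nat.le_mul_of_pos_left n h
    by_cases hP : 1 ≤ a ∧ a ≤ j ∧ (a + j) % 2 = 0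
    · rw [if_pos hP, if_neg (by omega)] at hc
      rw [hc] at hx
      generalize hK : (k:ℤ) * (n:ℤ) = K at hx hKn
      right
      exact ⟨(x - j - 1).toNat, by omega⟩
    · by_cases hQ : a ≤ n ∧ n < a + j ∧ (a + j) % 2 = 0
      · rw [if_neg hP, if_pos hQ] at hc
        rw [hc] at hx
        generalize hK : (k:ℤ) * (n:ℤ) = K at hx hKn
        by_cases hge : (j:ℤ) + 1 ≤ x
        · right; exact ⟨(x - j - 1).toNat, by omega⟩
        · left; exact ⟨((x + j) / 2).toNat, by omega⟩
      · rw [if_neg hP, if_neg hQ] at hc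
        rw [hc] at hx
        generalize hK : (k:ℤ) * (n:ℤ) = K at hx hKn
        by_cases hge : (j:ℤ) + 1 ≤ x
        · right; exact ⟨(x - j - 1).toNat, by omega⟩
        · left; exact ⟨((x + j) / 2).toNat, by omega⟩
  · intro h
    have hx' : (-(j:ℤ) ≤ x ∧ (x + j) % 2 = 0) ∨ ((j:ℤ) + 1 ≤ x) := by
      rcases h with ⟨m, hm⟩ | ⟨m, hm⟩ <;> omega
    by_cases hneg : x < 0
    · refine ⟨(x + n + 1).toNat, by omega, by omega, 0, ?_⟩
      have hc := hchar (x + n + 1).toNat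
      rw [if_neg (by omega), if_pos (by omega)] at hc
      rw [hc]
      push_cast
      omega
    · push_neg at hneg
      have hn0 : (0:ℤ) < (n:ℤ) := by omega
      obtain ⟨q, r, hqr, hr0, hrn, hq0⟩ :
          ∃ q r : ℤ, x = r + q * n ∧ 0 ≤ r ∧ r < n ∧ 0 ≤ q :=
        ⟨x / n, x % n, by rw [mul_comm]; exact (Int.emod_add_mul_ediv x n).symm,
          Int.emod_nonneg x (by omega), Int.emod_lt_of_pos x hn0,
          Int.ediv_nonneg hneg (le_of_lt hn0)⟩
      have hQn : q * (n:ℤ) = 0 ∨ (n:ℤ) ≤ q * (n:ℤ) := by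
        rcases hq0.eq_or_lt with hq | hq
        · left; rw [← hq, zero_mul]
        · right; exact le_mul_of_one_le_left (le_of_lt hn0) (by omega)
      have hc := hchar (r.toNat + 1)
      generalize hK : q * (n:ℤ) = K at hqr hQn
      by_cases hP : 1 ≤ r.toNat + 1 ∧ r.toNat + 1 ≤ j ∧ (r.toNat + 1 + j) % 2 = 0
      · have hq1 : 1 ≤ q := by
          by_contra hq1
          have hq' : q = 0 := by omega
          rw [hq', zero_mul] at hK
          omega
        rw [if_pos hP, if_neg (by omega)] at hc
        refine ⟨r.toNat + 1, by omega, by omega, (q - 1).toNat, ?_⟩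
        rw [hc, show (((q - 1).toNat : ℤ)) = q - 1 by omega,
          show ((r.toNat + 1 : ℕ) : ℤ) - 1 = r by omega]
        linear_combination hqr - hK
      · by_cases hQ : r.toNat + 1 ≤ n ∧ n < r.toNat + 1 + j ∧ (r.toNat + 1 + j) % 2 = 0
        · rw [if_neg hP, if_pos hQ] at hc
          refine ⟨r.toNat + 1, by omega, by omega, (q + 1).toNat, ?_⟩
          rw [hc, show (((q + 1).toNat : ℤ)) = q + 1 by omega,
            show ((r.toNat + 1 : ℕ) : ℤ) - 1 = r by omega]
          linear_combination hqr - hK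
        · rw [if_neg hP, if_neg hQ] at hc
          refine ⟨r.toNat + 1, by omega, by omega, q.toNat, ?_⟩
          rw [hc, show ((q.toNat : ℤ)) = q by omega,
            show ((r.toNat + 1 : ℕ) : ℤ) - 1 = r by omega]
          linear_combination hqr - hK
end

section
/- Let μ = ω_1 + ω_{n−2} ∈ ℤ^n with n ≥ 4 (so μ = (2,1,…,1,0)). The types μ' ∈ ℕ^n of normalized semi-modules for m = n−1, n whose dominant conjugate μ'_dom satisfies μ'_dom ⪯ μ and μ' ∈ W₀μ are exactly the vectors w_max μ' = s_{l+1} ⋯ s_{n−3} s_{n−2} s_{k−1} ⋯ s_2 s_1 · μ for integers 1 ≤ k ≤ n−2 and k ≤ l ≤ n−2; in particular there are exactly (n−1)(n−2)/2 such types. -/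
/-!
Write `ν = w_max μ'`. Lying in the `W₀`-orbit of `μ = (2,1,…,1,0,0)`, `ν` has a single entry `2`,
say at `p`, two entries `0` and all other entries `1`; in particular `μ'_dom = μ`, so the dominance
condition is automatic. With denominators cleared, `ν_b ⪯ ν` says `ν_1 + ⋯ + ν_t ≥ t` for `t < n`.
At `t = n - 1` this forces `ν_n = 0`; if the other zero of `ν` is at `q`, the inequality at `t = q`
holds exactly when `p < q`, and then it holds for every `t`. Hence the types are indexed by the
pairs `1 ≤ p < q ≤ n - 1`: the type for `(p, q)` is `w μ` for the word with `k = p`, `l = q - 1`,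
and there are `(n - 1).choose 2` of them.
-/

open Finset

lemma prod_swap_range'_apply (i m x : ℕ) :
    ((List.range' i m).map fun j => Equiv.swap j (j + 1)).prod x =
      if x = i + m then i else if i ≤ x ∧ x < i + m then x + 1 else x := by
  induction m generalizing i with
  | zero =>
    simp only [List.range'_zero, List.map_nil, List.prod_nil, Equiv.Perm.one_apply]
    split_ifs <;> omega
  | succ m ih =>
    rw [List.range'_succ, List.map_cons, List.prod_cons, Equiv.Perm.mul_apply, ih,
      Equiv.swap_apply_def]
    split_ifs <;> omega

lemma prod_swap_range'_inv_apply (i m x : ℕ) :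
    (((List.range' i m).map fun j => Equiv.swap j (j + 1)).prod)⁻¹ x =
      if x = i then i + m else if i < x ∧ x ≤ i + m then x - 1 else x := by
  rw [Equiv.Perm.inv_eq_iff_eq, prod_swap_range'_apply]
  split_ifs <;> omega

lemma inv_prod_swap_reverse (l : List ℕ) :
    ((l.reverse.map fun j => Equiv.swap j (j + 1)).prod)⁻¹ =
      (l.map fun j => Equiv.swap j (j + 1)).prod := by
  simp [List.prod_inv_reverse, List.map_reverse, Function.comp_def, Equiv.swap_inv]

/-- The word `s_{l+1} ⋯ s_{n-2} s_{k-1} ⋯ s_1`, where `s_j = Equiv.swap j (j + 1)`. -/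
def wordPerm (n k l : ℕ) : Equiv.Perm ℕ :=
  ((List.range' (l + 1) (n - 2 - l) ++ (List.range' 1 (k - 1)).reverse).map
    fun j => Equiv.swap j (j + 1)).prod

lemma wordPerm_inv_apply {n k l : ℕ} (hk : 1 ≤ k) (hkl : k ≤ l) (hl : l ≤ n - 2) (t : ℕ) :
    (wordPerm n k l)⁻¹ t =
      if t = k then 1 else if t = l + 1 then n - 1
      else if 1 ≤ t ∧ t < k then t + 1 else if l + 1 < t ∧ t ≤ n - 1 then t - 1 else t := by
  rw [wordPerm, List.map_append, List.prod_append, mul_inv_rev, inv_prod_swap_reverse,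
    Equiv.Perm.mul_apply, prod_swap_range'_apply, prod_swap_range'_inv_apply]
  split_ifs <;> omega

def PreservesIcc (n : ℕ) (σ : Equiv.Perm ℕ) : Prop :=
  ∀ a, 1 ≤ a ∧ a ≤ n ↔ 1 ≤ σ a ∧ σ a ≤ n

lemma PreservesIcc.mul {n : ℕ} {σ τ : Equiv.Perm ℕ} (hσ : PreservesIcc n σ)
    (hτ : PreservesIcc n τ) : PreservesIcc n (σ * τ) :=
  fun a => (hτ a).trans (hσ (τ a))

lemma PreservesIcc.symm_mem {n : ℕ} {σ : Equiv.Perm ℕ} (hσ : PreservesIcc n σ) {x : ℕ}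
    (h1 : 1 ≤ x) (h2 : x ≤ n) : 1 ≤ σ.symm x ∧ σ.symm x ≤ n :=
  (hσ _).2 (by simpa using And.intro h1 h2)

lemma preservesIcc_wordPerm_inv {n k l : ℕ} (hk : 1 ≤ k) (hkl : k ≤ l) (hl : l ≤ n - 2) :
    PreservesIcc n (wordPerm n k l)⁻¹ := by
  intro a
  rw [wordPerm_inv_apply hk hkl hl]
  split_ifs <;> omega

def reflect (n a : ℕ) : ℕ := if 1 ≤ a ∧ a ≤ n then n + 1 - a else a

lemma reflect_involutive (n : ℕ) : Function.Involutive (reflect n) := by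
  intro a
  unfold reflect
  split_ifs <;> omega

lemma preservesIcc_reflect (n : ℕ) : PreservesIcc n (reflect_involutive n).toPerm := by
  intro a
  simp only [Function.Involutive.coe_toPerm, reflect]
  split_ifs <;> omega

lemma sum_Icc_reflect (n : ℕ) (f : ℕ → ℕ) :
    ∑ a ∈ Icc 1 n, f (n + 1 - a) = ∑ a ∈ Icc 1 n, f a := by
  apply sum_nbij' (fun a => n + 1 - a) (fun a => n + 1 - a) <;>
    simp only [mem_Icc] <;> intro a ha <;> first | omega | trivial

lemma mul_pred_le_mul_iff {n t S : ℕ} (ht : t < n) : t * (n - 1) ≤ n * S ↔ t ≤ S := by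
  obtain ⟨m, rfl⟩ : ∃ m, n = m + 1 := ⟨n - 1, by omega⟩
  rw [Nat.add_sub_cancel]
  constructor
  · intro h
    by_contra! hS
    nlinarith
  · intro h
    nlinarith

def markVec (p q r a : ℕ) : ℕ := if a = p then 2 else if a = q ∨ a = r then 0 else 1

lemma markVec_comm (p q r : ℕ) : markVec p q r = markVec p r q := by
  funext a
  simp only [markVec, or_comm]

lemma markVec_apply_perm (σ : Equiv.Perm ℕ) (p q r a : ℕ) :
    markVec p q r (σ a) = markVec (σ.symm p) (σ.symm q) (σ.symm r) a := by
  simp only [markVec, ← Equiv.eq_symm_apply]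

lemma sum_Icc_markVec {p q r : ℕ} (hp : 1 ≤ p) (hq : 1 ≤ q) (hr : 1 ≤ r) (hpq : p ≠ q)
    (hpr : p ≠ r) (hqr : q ≠ r) (t : ℕ) :
    ∑ a ∈ Icc 1 t, markVec p q r a + (if q ≤ t then 1 else 0) + (if r ≤ t then 1 else 0) =
      t + if p ≤ t then 1 else 0 := by
  have key : ∑ a ∈ Icc 1 t,
      (markVec p q r a + (if a = q then 1 else 0) + (if a = r then 1 else 0)) =
        ∑ a ∈ Icc 1 t, (1 + if a = p then 1 else 0) :=
    sum_congr rfl fun a _ => by unfold markVec; split_ifs <;> omega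
  simp only [sum_add_distrib, sum_ite_eq', mem_Icc, sum_const, Nat.card_Icc, smul_eq_mul,
    mul_one] at key
  split_ifs at key ⊢ <;> omega

def wMax (n : ℕ) (v : ℕ → ℕ) (a : ℕ) : ℕ := if 1 ≤ a ∧ a ≤ n then v (n + 1 - a) else 0

lemma sum_Icc_wMax_reflect {n t : ℕ} (v : ℕ → ℕ) (ht : t ≤ n) :
    ∑ a ∈ Icc 1 t, wMax n v (n + 1 - a) = ∑ a ∈ Icc 1 t, v a :=
  sum_congr rfl fun a ha => by
    rw [mem_Icc] at ha
    rw [wMax, if_pos (by omega), Nat.sub_sub_self (by omega)]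

lemma sum_Icc_wMax (n : ℕ) (v : ℕ → ℕ) : ∑ a ∈ Icc 1 n, wMax n v a = ∑ a ∈ Icc 1 n, v a := by
  rw [← sum_Icc_reflect, sum_Icc_wMax_reflect v le_rfl]

lemma wMax_markVec_eq {n k l : ℕ} {μ : ℕ → ℕ}
    (hμ : ∀ a, 1 ≤ a → a ≤ n → μ a = markVec 1 (n - 1) n a)
    (hk : 1 ≤ k) (hkl : k ≤ l) (hl : l ≤ n - 2) (a : ℕ) :
    wMax n (markVec k (l + 1) n) a =
      if 1 ≤ a ∧ a ≤ n then μ ((wordPerm n k l)⁻¹ (n + 1 - a)) else 0 := by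
  unfold wMax
  split_ifs with ha
  · have hmem := (preservesIcc_wordPerm_inv hk hkl hl (n + 1 - a)).1 (by omega)
    rw [hμ _ hmem.1 hmem.2, wordPerm_inv_apply hk hkl hl]
    unfold markVec
    split_ifs <;> omega
  · rfl

lemma wMax_markVec_le_two (n p q r x : ℕ) : wMax n (markVec p q r) x ≤ 2 := by
  unfold wMax markVec
  split_ifs <;> omega

lemma eq_of_wMax_markVec_eq_two {n p q r x : ℕ} (h : wMax n (markVec p q r) x = 2) :
    x = n + 1 - p := by
  unfold wMax markVec at h
  split_ifs at h <;> omega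

lemma sum_Icc_le_succ {f : ℕ → ℕ} {t : ℕ} (h1 : f 1 ≤ 2) (h : ∀ a, 2 ≤ a → a ≤ t → f a ≤ 1) :
    ∑ a ∈ Icc 1 t, f a ≤ t + 1 := by
  calc ∑ a ∈ Icc 1 t, f a ≤ ∑ a ∈ Icc 1 t, (1 + if a = 1 then 1 else 0) :=
        sum_le_sum fun a ha => by
          rw [mem_Icc] at ha
          split_ifs with h'
          · subst h'; omega
          · have := h a (by omega) ha.2; omega
    _ ≤ t + 1 := by
        simp only [sum_add_distrib, sum_ite_eq', mem_Icc, sum_const, Nat.card_Icc, smul_eq_mul,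
          mul_one]
        split_ifs <;> omega

def InOrbit (n : ℕ) (μ μ' : ℕ → ℕ) : Prop :=
  ∃ σ : Equiv.Perm ℕ, PreservesIcc n σ ∧ ∀ a, 1 ≤ a → a ≤ n → μ' a = μ (σ a)

def DominantConjLE (n : ℕ) (μ' μ : ℕ → ℕ) : Prop :=
  ∀ σ : Equiv.Perm ℕ, PreservesIcc n σ →
    (∀ a b, 1 ≤ a → a ≤ b → b ≤ n → μ' (σ b) ≤ μ' (σ a)) →
    (∀ t, 1 ≤ t → t ≤ n → ∑ a ∈ Icc 1 t, μ' (σ a) ≤ ∑ a ∈ Icc 1 t, μ a) ∧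
      ∑ a ∈ Icc 1 n, μ' (σ a) = ∑ a ∈ Icc 1 n, μ a

/-- `ν_b ⪯ w_max μ'` for `ν_b = ((n-1)/n, …, (n-1)/n)`, with denominators cleared. -/
def NewtonLE (n : ℕ) (μ' : ℕ → ℕ) : Prop :=
  (∀ t, 1 ≤ t → t ≤ n → t * (n - 1) ≤ n * ∑ a ∈ Icc 1 t, μ' (n + 1 - a)) ∧
    ∑ a ∈ Icc 1 n, μ' a = n - 1

def IsType (n : ℕ) (μ μ' : ℕ → ℕ) : Prop :=
  (∀ a, (a = 0 ∨ n < a) → μ' a = 0) ∧ InOrbit n μ μ' ∧ DominantConjLE n μ' μ ∧ NewtonLE n μ'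

section Types

variable {n : ℕ} {μ : ℕ → ℕ}

lemma inOrbit_wMax_markVec (hμ : ∀ a, 1 ≤ a → a ≤ n → μ a = markVec 1 (n - 1) n a)
    {p q : ℕ} (hp : 1 ≤ p) (hpq : p < q) (hq : q ≤ n - 1) :
    InOrbit n μ (wMax n (markVec p q n)) := by
  obtain ⟨l, rfl⟩ : ∃ l, q = l + 1 := ⟨q - 1, by omega⟩
  refine ⟨(wordPerm n p l)⁻¹ * (reflect_involutive n).toPerm,
    (preservesIcc_wordPerm_inv hp (by omega) (by omega)).mul (preservesIcc_reflect n),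
    fun a h1 h2 => ?_⟩
  rw [wMax_markVec_eq hμ hp (by omega) (by omega), if_pos ⟨h1, h2⟩, Equiv.Perm.mul_apply,
    Function.Involutive.coe_toPerm, reflect, if_pos ⟨h1, h2⟩]

lemma sum_Icc_wMax_markVec {p q : ℕ} (hp : 1 ≤ p) (hpq : p < q) (hq : q ≤ n - 1) :
    ∑ a ∈ Icc 1 n, wMax n (markVec p q n) a = n - 1 := by
  rw [sum_Icc_wMax]
  have := sum_Icc_markVec (q := q) (r := n) hp (by omega) (by omega) (by omega) (by omega)
    (by omega) n
  split_ifs at this <;> omega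

lemma dominantConjLE_wMax_markVec (hn : 3 ≤ n)
    (hμ : ∀ a, 1 ≤ a → a ≤ n → μ a = markVec 1 (n - 1) n a)
    {p q : ℕ} (hp : 1 ≤ p) (hpq : p < q) (hq : q ≤ n - 1) :
    DominantConjLE n (wMax n (markVec p q n)) μ := by
  intro σ hσ hanti
  set μ' := wMax n (markVec p q n)
  have hμsum : ∀ t, 1 ≤ t → t ≤ n → ∑ a ∈ Icc 1 t, μ a + (if n - 1 ≤ t then 1 else 0) +
      (if n ≤ t then 1 else 0) = t + 1 := fun t ht1 ht => by
    rw [sum_congr rfl fun a ha => hμ a (mem_Icc.1 ha).1 ((mem_Icc.1 ha).2.trans ht)]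
    have := sum_Icc_markVec (q := n - 1) (r := n) le_rfl (by omega) (by omega) (by omega)
      (by omega) (by omega) t
    split_ifs at this ⊢ <;> omega
  have htotal : ∑ a ∈ Icc 1 n, μ' (σ a) = n - 1 := by
    rw [sum_equiv σ (s := Icc 1 n) (t := Icc 1 n) (g := μ')
      (fun a => by simp only [mem_Icc]; exact hσ a) fun _ _ => rfl]
    exact sum_Icc_wMax_markVec hp hpq hq
  -- in decreasing order only the first entry can be the unique `2` of `μ'`
  have hle_one : ∀ a, 2 ≤ a → a ≤ n → μ' (σ a) ≤ 1 := fun a h2 hn' => by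
    by_contra! h
    have e1 : μ' (σ a) = 2 := le_antisymm (wMax_markVec_le_two ..) h
    have e2 : μ' (σ 1) = 2 :=
      le_antisymm (wMax_markVec_le_two ..) (e1 ▸ hanti 1 a le_rfl (by omega) hn')
    have := σ.injective
      ((eq_of_wMax_markVec_eq_two e1).trans (eq_of_wMax_markVec_eq_two e2).symm)
    omega
  refine ⟨fun t ht1 ht2 => ?_, by have := hμsum n (by omega) le_rfl; split_ifs at this <;> omega⟩
  have hsucc := sum_Icc_le_succ (f := fun a => μ' (σ a)) (wMax_markVec_le_two ..)
    fun a h2 ha => hle_one a h2 (ha.trans ht2)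
  have hpart := (sum_le_sum_of_subset (f := fun a => μ' (σ a))
    (Icc_subset_Icc_right ht2)).trans_eq htotal
  have := hμsum t ht1 ht2
  split_ifs at this <;> omega

lemma newtonLE_wMax_markVec {p q : ℕ} (hp : 1 ≤ p) (hpq : p < q) (hq : q ≤ n - 1) :
    NewtonLE n (wMax n (markVec p q n)) := by
  refine ⟨fun t _ ht => ?_, sum_Icc_wMax_markVec hp hpq hq⟩
  rw [sum_Icc_wMax_reflect _ ht]
  have := sum_Icc_markVec (q := q) (r := n) hp (by omega) (by omega) (by omega) (by omega)
    (by omega) t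
  rcases ht.lt_or_eq with ht | rfl
  · exact (mul_pred_le_mul_iff ht).2 (by split_ifs at this <;> omega)
  · exact Nat.mul_le_mul_left _ (by split_ifs at this <;> omega)

lemma exists_markVec_of_inOrbit (hn : 3 ≤ n)
    (hμ : ∀ a, 1 ≤ a → a ≤ n → μ a = markVec 1 (n - 1) n a) {μ' : ℕ → ℕ}
    (h : InOrbit n μ μ') :
    ∃ p q r, 1 ≤ p ∧ p ≤ n ∧ 1 ≤ q ∧ q ≤ n ∧ 1 ≤ r ∧ r ≤ n ∧ p ≠ q ∧ p ≠ r ∧ q ≠ r ∧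
      ∀ a, 1 ≤ a → a ≤ n → μ' a = markVec p q r a := by
  obtain ⟨σ, hσ, hμ'⟩ := h
  have h1 := hσ.symm_mem le_rfl (by omega)
  have h2 := hσ.symm_mem (x := n - 1) (by omega) (by omega)
  have h3 := hσ.symm_mem (x := n) (by omega) le_rfl
  refine ⟨σ.symm 1, σ.symm (n - 1), σ.symm n, h1.1, h1.2, h2.1, h2.2, h3.1, h3.2,
    σ.symm.injective.ne (by omega), σ.symm.injective.ne (by omega),
    σ.symm.injective.ne (by omega), fun a ha1 ha2 => ?_⟩
  have hσa := (hσ a).1 ⟨ha1, ha2⟩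
  rw [hμ' a ha1 ha2, hμ _ hσa.1 hσa.2, markVec_apply_perm]

lemma zero_last_of_newton_markVec {p q r : ℕ} (hp : 1 ≤ p) (hq : 1 ≤ q) (hr : 1 ≤ r)
    (hqn : q ≤ n) (hrn : r ≤ n) (hpq : p ≠ q) (hpr : p ≠ r) (hqr : q ≠ r)
    (h : (n - 1) * (n - 1) ≤ n * ∑ a ∈ Icc 1 (n - 1), markVec p q r a) : q = n ∨ r = n := by
  rw [mul_pred_le_mul_iff (by omega)] at h
  have := sum_Icc_markVec hp hq hr hpq hpr hqr (n - 1)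
  split_ifs at this <;> omega

lemma lt_of_newton_markVec {p q : ℕ} (hp : 1 ≤ p) (hq : 1 ≤ q) (hqn : q < n) (hpq : p ≠ q)
    (hpn : p ≠ n) (h : q * (n - 1) ≤ n * ∑ a ∈ Icc 1 q, markVec p q n a) : p < q := by
  rw [mul_pred_le_mul_iff hqn] at h
  have := sum_Icc_markVec hp hq (by omega) hpq hpn (by omega) q
  split_ifs at this <;> omega

lemma exists_eq_wMax_markVec_of_isType (hn : 3 ≤ n)
    (hμ : ∀ a, 1 ≤ a → a ≤ n → μ a = markVec 1 (n - 1) n a) {μ' : ℕ → ℕ}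
    (h : IsType n μ μ') : ∃ p q, 1 ≤ p ∧ p < q ∧ q ≤ n - 1 ∧ μ' = wMax n (markVec p q n) := by
  obtain ⟨hsupp, horb, -, hnewton, -⟩ := h
  obtain ⟨P, Q, R, hP1, hPn, hQ1, hQn, hR1, hRn, hPQ, hPR, hQR, hμ'⟩ :=
    exists_markVec_of_inOrbit hn hμ horb
  have hwMax : μ' = wMax n (markVec (n + 1 - P) (n + 1 - Q) (n + 1 - R)) := by
    funext a
    unfold wMax
    split_ifs with ha
    · rw [hμ' a ha.1 ha.2]
      unfold markVec
      split_ifs <;> omega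
    · exact hsupp a (by omega)
  subst hwMax
  replace hnewton : ∀ t, 1 ≤ t → t ≤ n →
      t * (n - 1) ≤ n * ∑ a ∈ Icc 1 t, markVec (n + 1 - P) (n + 1 - Q) (n + 1 - R) a :=
    fun t ht1 ht => sum_Icc_wMax_reflect (n := n) _ ht ▸ hnewton t ht1 ht
  obtain ⟨p, q, hp, hpn, hq, hqn, hpq, hpattern⟩ : ∃ p q, 1 ≤ p ∧ p < n ∧ 1 ≤ q ∧ q < n ∧
      p ≠ q ∧ markVec (n + 1 - P) (n + 1 - Q) (n + 1 - R) = markVec p q n := by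
    rcases zero_last_of_newton_markVec (by omega) (by omega) (by omega) (by omega) (by omega)
      (by omega) (by omega) (by omega) (hnewton (n - 1) (by omega) (by omega))
      with hQ | hR
    · exact ⟨n + 1 - P, n + 1 - R, by omega, by omega, by omega, by omega, by omega,
        by rw [markVec_comm, hQ]⟩
    · exact ⟨n + 1 - P, n + 1 - Q, by omega, by omega, by omega, by omega, by omega,
        by rw [hR]⟩
  rw [hpattern] at hnewton ⊢
  exact ⟨p, q, hp, lt_of_newton_markVec hp hq hqn hpq hpn.ne (hnewton q hq hqn.le), by omega,
    rfl⟩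

lemma setOf_isType_eq_image (hn : 3 ≤ n)
    (hμ : ∀ a, 1 ≤ a → a ≤ n → μ a = markVec 1 (n - 1) n a) :
    {μ' | IsType n μ μ'} = (fun pq : ℕ × ℕ => wMax n (markVec pq.1 pq.2 n)) ''
      {pq | 1 ≤ pq.1 ∧ pq.1 < pq.2 ∧ pq.2 ≤ n - 1} := by
  ext μ'
  simp only [Set.mem_ofPred_eq, Set.mem_image, Prod.exists]
  constructor
  · intro h
    obtain ⟨p, q, hp, hpq, hq, rfl⟩ := exists_eq_wMax_markVec_of_isType hn hμ h
    exact ⟨p, q, ⟨hp, hpq, hq⟩, rfl⟩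
  · rintro ⟨p, q, ⟨hp, hpq, hq⟩, rfl⟩
    refine ⟨fun a ha => ?_, inOrbit_wMax_markVec hμ hp hpq hq,
      dominantConjLE_wMax_markVec hn hμ hp hpq hq, newtonLE_wMax_markVec hp hpq hq⟩
    rw [wMax, if_neg (by omega)]

lemma injOn_wMax_markVec :
    Set.InjOn (fun pq : ℕ × ℕ => wMax n (markVec pq.1 pq.2 n))
      {pq | 1 ≤ pq.1 ∧ pq.1 < pq.2 ∧ pq.2 ≤ n - 1} := by
  rintro ⟨p, q⟩ ⟨hp, hpq, hq⟩ ⟨p', q'⟩ ⟨hp', hpq', hq'⟩ h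
  have h1 := congrFun h (n + 1 - p)
  have h2 := congrFun h (n + 1 - q)
  simp only [wMax, markVec] at h1 h2
  rw [Prod.mk.injEq]
  split_ifs at h1 h2 <;> omega

end Types

lemma ncard_setOf_lt_le (m : ℕ) :
    {pq : ℕ × ℕ | 1 ≤ pq.1 ∧ pq.1 < pq.2 ∧ pq.2 ≤ m}.ncard = m.choose 2 := by
  have : {pq : ℕ × ℕ | 1 ≤ pq.1 ∧ pq.1 < pq.2 ∧ pq.2 ≤ m} =
      ↑({x ∈ Icc 1 m ×ˢ Icc 1 m | x.1 < x.2} : Finset (ℕ × ℕ)) := by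
    ext ⟨p, q⟩
    simp only [Set.mem_ofPred_eq, coe_filter, mem_product, mem_Icc]
    omega
  rw [this, Set.ncard_coe_finset, card_product_filter_lt, Nat.card_Icc, Nat.add_sub_cancel]

/-- for n ≥ 4 and μ = ω₁ + ω_{n−2} = (2,1,…,1,0,0) (1-based coordinates,
zero outside [1,n]), the types μ' ∈ ℕ^n of normalized semi-modules for m = n−1, n
(characterized by ν_b ⪯ w_max μ', where ν_b = ((n−1)/n,…,(n−1)/n)) with μ'_dom ⪯ μ and
μ' ∈ W₀μ are exactly the vectors with
w_max μ' = s_{l+1} ⋯ s_{n−3} s_{n−2} s_{k−1} ⋯ s_2 s_1 · μ for 1 ≤ k ≤ n−2 and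
k ≤ l ≤ n−2; in particular there are exactly (n−1)(n−2)/2 such types. Here
(w_max μ')(a) = μ'(n+1−a) and a permutation p acts on vectors by (p·v)(a) = v(p⁻¹ a). -/
theorem stmt_19 (n : ℕ) (hn : 4 ≤ n)
    (μ : ℕ → ℕ)
    (hμ : ∀ a, μ a = if a = 1 then 2 else if 2 ≤ a ∧ a ≤ n - 2 then 1 else 0)
    (Ty : Set (ℕ → ℕ))
    (hTy : Ty = {μ' : ℕ → ℕ |
      (∀ a : ℕ, (a = 0 ∨ n < a) → μ' a = 0) ∧
      -- μ' ∈ W₀ μ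
      (∃ σ : Equiv.Perm ℕ, (∀ a, 1 ≤ a ∧ a ≤ n ↔ 1 ≤ σ a ∧ σ a ≤ n) ∧
        ∀ a, 1 ≤ a → a ≤ n → μ' a = μ (σ a)) ∧
      -- the dominant conjugate of μ' is ⪯ μ
      (∀ σ : Equiv.Perm ℕ, (∀ a, 1 ≤ a ∧ a ≤ n ↔ 1 ≤ σ a ∧ σ a ≤ n) →
        (∀ a b, 1 ≤ a → a ≤ b → b ≤ n → μ' (σ b) ≤ μ' (σ a)) →
        (∀ t, 1 ≤ t → t ≤ n →
          ∑ a ∈ Finset.Icc 1 t, μ' (σ a) ≤ ∑ a ∈ Finset.Icc 1 t, μ a) ∧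
        ∑ a ∈ Finset.Icc 1 n, μ' (σ a) = ∑ a ∈ Finset.Icc 1 n, μ a) ∧
      -- μ' is a type of a normalized semi-module for n−1, n: ν_b ⪯ w_max μ'
      (∀ t, 1 ≤ t → t ≤ n →
        t * (n - 1) ≤ n * ∑ a ∈ Finset.Icc 1 t, μ' (n + 1 - a)) ∧
      ∑ a ∈ Finset.Icc 1 n, μ' a = n - 1}) :
    Ty = {μ' : ℕ → ℕ | ∃ k l, 1 ≤ k ∧ k ≤ n - 2 ∧ k ≤ l ∧ l ≤ n - 2 ∧
        ∀ a : ℕ, μ' a =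
          if 1 ≤ a ∧ a ≤ n then
            μ (((((List.range' (l + 1) (n - 2 - l)) ++
                (List.range' 1 (k - 1)).reverse).map
                  (fun j => Equiv.swap j (j + 1))).prod)⁻¹ (n + 1 - a))
          else 0} ∧
    Ty.ncard = (n - 1) * (n - 2) / 2 := by
  have hμ' : ∀ a, 1 ≤ a → a ≤ n → μ a = markVec 1 (n - 1) n a := fun a _ _ => by
    rw [hμ, markVec]
    split_ifs <;> omega
  have hTy' : Ty = (fun pq : ℕ × ℕ => wMax n (markVec pq.1 pq.2 n)) ''
      {pq | 1 ≤ pq.1 ∧ pq.1 < pq.2 ∧ pq.2 ≤ n - 1} :=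
    hTy.trans (setOf_isType_eq_image (by omega) hμ')
  refine ⟨?_, ?_⟩
  · rw [hTy']
    ext μ'
    simp only [Set.mem_image, Set.mem_ofPred_eq, Prod.exists]
    constructor
    · rintro ⟨p, q, ⟨hp, hpq, hq⟩, rfl⟩
      obtain ⟨l, rfl⟩ : ∃ l, q = l + 1 := ⟨q - 1, by omega⟩
      exact ⟨p, l, hp, by omega, by omega, by omega, wMax_markVec_eq hμ' hp (by omega) (by omega)⟩
    · rintro ⟨k, l, hk, -, hkl, hl, h⟩
      exact ⟨k, l + 1, ⟨hk, by omega, by omega⟩,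
        funext fun a => (wMax_markVec_eq hμ' hk hkl hl a).trans (h a).symm⟩
  · rw [hTy', injOn_wMax_markVec.ncard_image, ncard_setOf_lt_le,
      Nat.choose_two_right, Nat.sub_sub]
end
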